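/- arXiv:2102.03651 — 6 statements merged into one kernel-verified Lean document; each statement's English description precedes it below -/
import Mathlib

section
/- Let q > 3 be a prime power and let P be a rooted tree poset with m elements whose shrubbery consists of the shrubs S_{m_1}, …, S_{m_s}. Then the minimum distance of the toric code C_{O_P} over 𝔽_q is d(C_{O_P}) = (q−1)^{m − Σ_{i=1}^s (m_i − 1)} · (q−2)^{Σ_{i=1}^s (m_i − 1)}; equivalently, writing b = Σ_{i=1}^s (m_i − 1) for the number of maximal elements of P, d(C_{O_P}) = (q−1)^{m−b} (q−2)^b. -/
/-!
In a finite poset in which every element covers at most one element, take a minimal element `r`.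
If `r` is not the least element, the elements above `r` and the others split the poset into two
parts with no comparabilities between them; the slices of any `f ∈ L_P` along this splitting lie
in the spaces of the parts, so lower bounds for the number of nonzero values multiply. If `r` is
least, every upper set either is everything or avoids `r`, so `f = a x_r ∏_{j ≠ r} x_j + g` with
`g` free of `x_r`: for `a = 0` the bound for `g` gains a factor `q - 1`, and for `a ≠ 0` each
choice of the other coordinates leaves at most one root `x_r`, giving `(q - 2) (q - 1)^(m - 1)`
nonzero values. Induction yields `(q - 1)^(m - b) (q - 2)^b`, which `∏_{y maximal} (x_y - 1)`
attains.
-/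

open Finset

/-- A subset `W` of `α` is an upper order ideal with respect to the order relation `le`
if it is upward closed. -/
def IsUpperIdeal {α : Type*} (le : α → α → Prop) (W : Set α) : Prop :=
  ∀ ⦃x⦄, x ∈ W → ∀ ⦃y⦄, le x y → y ∈ W

/-- The space `L_P` of sections: the `F`-span of the monomials `∏_{i ∈ W} x_i`,
where `W` ranges over the upper order ideals of the poset `(α, le)`. -/
def monomialSpan (α : Type*) [Fintype α] (le : α → α → Prop)
    (F : Type*) [Field F] : Submodule F ((α → Fˣ) → F) :=
  Submodule.span F {g : (α → Fˣ) → F |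
    ∃ W : Finset α, (∀ x ∈ W, ∀ y, le x y → y ∈ W) ∧
      g = fun x => ∏ i ∈ W, (x i : F)}

/-- The minimum distance of the toric code of the order polytope of the poset `(α, le)`
over the finite field `F`:  `(q-1)^m - max { Z(f) : f ∈ L_P, f ≠ 0 }`. -/
noncomputable def toricMinDist (α : Type*) [Fintype α] (le : α → α → Prop)
    (F : Type*) [Field F] [Fintype F] : ℕ :=
  (Fintype.card F - 1) ^ Fintype.card α -
    sSup {n : ℕ | ∃ g ∈ monomialSpan α le F, g ≠ 0 ∧
      n = Nat.card {x : α → Fˣ // g x = 0}}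

/-- For finite posets: a disjoint union of rooted trees, the roots being the minimal elements. -/
def IsForestOrder (α : Type*) [Preorder α] : Prop :=
  ∀ y : α, IsChain (· ≤ ·) (Set.Iic y)

def MinWeightAtLeast (α : Type*) [Fintype α] [LE α] (F : Type*) [Field F] (d : ℕ) : Prop :=
  ∀ f ∈ monomialSpan α (· ≤ ·) F, f ≠ 0 → d ≤ Nat.card {x : α → Fˣ // f x ≠ 0}

noncomputable def toricWeight (F α : Type*) [Fintype F] [Fintype α] [LE α] : ℕ :=
  (Fintype.card F - 1) ^ (Fintype.card α - Nat.card {y : α // IsMax y}) *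
    (Fintype.card F - 2) ^ Nat.card {y : α // IsMax y}

section Forest

variable {α : Type*} [PartialOrder α]

theorem isForestOrder_of_existsUnique_covBy [Finite α]
    (h : ∀ y : α, ¬ IsMin y → ∃! x, x ⋖ y) : IsForestOrder α := by
  intro y
  induction y using WellFoundedLT.induction with
  | _ y ih =>
    intro a ha b hb _
    rcases (Set.mem_Iic.mp ha).eq_or_lt with rfl | hay
    · exact .inr hb
    rcases (Set.mem_Iic.mp hb).eq_or_lt with rfl | hby
    · exact .inl ha
    obtain ⟨c, hac, hcy⟩ := exists_le_covBy_of_lt hay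
    obtain ⟨c', hbc', hc'y⟩ := exists_le_covBy_of_lt hby
    rw [(h y hay.not_isMin).unique hc'y hcy] at hbc'
    by_cases hab : a = b
    · exact .inl hab.le
    exact ih c hcy.lt hac hbc' hab

theorem IsForestOrder.subtype (hα : IsForestOrder α) (p : α → Prop) :
    IsForestOrder {x // p x} := fun y _ ha _ hb hab =>
  hα y.1 (Subtype.coe_le_coe.mpr ha) (Subtype.coe_le_coe.mpr hb) (Subtype.coe_injective.ne hab)

theorem IsForestOrder.isLowerSet_Ici (hα : IsForestOrder α) {r : α} (hr : IsMin r) :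
    IsLowerSet (Set.Ici r) := by
  intro a b hba hra
  rcases (hα a).total (Set.mem_Iic.mpr hra) (Set.mem_Iic.mpr hba) with hrb | hbr
  · exact hrb
  · exact hr hbr

end Forest

section Maxima

variable {α : Type*}

theorem card_isMax_le_card [Fintype α] [LE α] : Nat.card {y : α // IsMax y} ≤ Fintype.card α :=
  Nat.card_eq_fintype_card (α := α) ▸ Finite.card_subtype_le _

theorem IsUpperSet.card_isMax_subtype [Preorder α] {p : α → Prop} (hp : IsUpperSet {x | p x}) :
    Nat.card {y : {x // p x} // IsMax y} = Nat.card {x // p x ∧ IsMax x} := by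
  have hmax : ∀ y : {x // p x}, IsMax y ↔ IsMax (y : α) := fun y =>
    ⟨fun h b hb => h (show y ≤ ⟨b, hp hb y.2⟩ from hb), fun h b hb => h hb⟩
  exact Nat.card_congr ((Equiv.subtypeEquivRight hmax).trans
    (Equiv.subtypeSubtypeEquivSubtypeInter p IsMax))

theorem card_and_add_card_not_and [Finite α] (p q : α → Prop) :
    Nat.card {x // p x ∧ q x} + Nat.card {x // ¬ p x ∧ q x} = Nat.card {x // q x} := by
  classical
  have := Fintype.ofFinite α
  simp only [Nat.card_eq_fintype_card, Fintype.card_subtype]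
  rw [← card_filter_add_card_filter_not (s := {x | q x}) p, filter_filter, filter_filter]
  congr 2 <;> ext x <;> simp [and_comm]

end Maxima

section Count

theorem card_ne_zero_comp_equiv {A B M : Type*} [Zero M] (e : A ≃ B) (f : A → M) :
    Nat.card {b // f (e.symm b) ≠ 0} = Nat.card {a // f a ≠ 0} :=
  Nat.card_congr (e.symm.subtypeEquivOfSubtype (p := fun a => f a ≠ 0))

theorem card_ne_zero_comp_snd {X Y M : Type*} [Zero M] (g : Y → M) :
    Nat.card {p : X × Y // g p.2 ≠ 0} = Nat.card X * Nat.card {y // g y ≠ 0} := by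
  rw [← Nat.card_prod]
  exact Nat.card_congr ⟨fun p => (p.1.1, ⟨p.1.2, p.2⟩), fun p => ⟨(p.1, p.2.1), p.2.2⟩,
    fun _ => rfl, fun _ => rfl⟩

variable {X Y M : Type*} [Fintype X] [Fintype Y] [Zero M]

theorem card_ne_zero_prod_eq_sum (f : X × Y → M) :
    Nat.card {p // f p ≠ 0} = ∑ y, Nat.card {x // f (x, y) ≠ 0} := by
  classical
  simp only [Nat.card_eq_fintype_card, Fintype.card_subtype, card_filter,
    Fintype.sum_prod_type_right]

theorem mul_le_card_ne_zero_prod (f : X × Y → M) {dX dY : ℕ}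
    (hX : ∀ y, (fun x => f (x, y)) ≠ 0 → dX ≤ Nat.card {x // f (x, y) ≠ 0})
    (hY : ∀ x, (fun y => f (x, y)) ≠ 0 → dY ≤ Nat.card {y // f (x, y) ≠ 0})
    (hf : f ≠ 0) : dX * dY ≤ Nat.card {p // f p ≠ 0} := by
  classical
  obtain ⟨⟨x₀, y₀⟩, hx₀y₀⟩ := Function.ne_iff.mp hf
  have hrow : dY ≤ #{y | f (x₀, y) ≠ 0} := by
    simpa [Nat.card_eq_fintype_card, Fintype.card_subtype] using
      hY x₀ (Function.ne_iff.mpr ⟨y₀, hx₀y₀⟩)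
  rw [card_ne_zero_prod_eq_sum, mul_comm]
  calc dY * dX ≤ #{y | f (x₀, y) ≠ 0} * dX := Nat.mul_le_mul_right dX hrow
    _ = ∑ y with f (x₀, y) ≠ 0, dX := by rw [sum_const, smul_eq_mul]
    _ ≤ ∑ y with f (x₀, y) ≠ 0, Nat.card {x // f (x, y) ≠ 0} :=
        sum_le_sum fun y hy => hX y (Function.ne_iff.mpr ⟨x₀, (mem_filter.mp hy).2⟩)
    _ ≤ ∑ y, Nat.card {x // f (x, y) ≠ 0} := sum_le_sum_of_subset (subset_univ _)

end Count

theorem sub_two_le_card_mul_add_ne_zero {F : Type*} [Field F] [Fintype F] {c : F} (hc : c ≠ 0)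
    (b : F) : Fintype.card F - 2 ≤ Nat.card {t : Fˣ // c * t + b ≠ 0} := by
  classical
  have hroot : Fintype.card {t : Fˣ // c * t + b = 0} ≤ 1 :=
    Fintype.card_le_one_iff.mpr fun t t' => Subtype.ext <| Units.ext <|
      mul_left_cancel₀ hc (add_right_cancel (t.2.trans t'.2.symm))
  rw [Nat.card_eq_fintype_card, Fintype.card_subtype_compl, Fintype.card_units]
  omega

section Span

variable {F : Type*} [Field F]

theorem prod_mem_monomialSpan {α : Type*} [Fintype α] [LE α] {W : Finset α}
    (hW : ∀ x ∈ W, ∀ y, x ≤ y → y ∈ W) :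
    (fun x : α → Fˣ => ∏ i ∈ W, (x i : F)) ∈ monomialSpan α (· ≤ ·) F :=
  Submodule.subset_span ⟨W, hW, rfl⟩

theorem comp_mem_monomialSpan {α β : Type*} [Fintype α] [LE α] [Fintype β] [LE β]
    (φ : (β → Fˣ) → α → Fˣ)
    (hφ : ∀ W : Finset α, (∀ x ∈ W, ∀ y, x ≤ y → y ∈ W) →
      (fun z => ∏ i ∈ W, (φ z i : F)) ∈ monomialSpan β (· ≤ ·) F)
    {f : (α → Fˣ) → F} (hf : f ∈ monomialSpan α (· ≤ ·) F) :
    (fun z => f (φ z)) ∈ monomialSpan β (· ≤ ·) F := by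
  have : monomialSpan α (· ≤ ·) F ≤
      (monomialSpan β (· ≤ ·) F).comap (LinearMap.funLeft F F φ) :=
    Submodule.span_le.mpr (by rintro _ ⟨W, hW, rfl⟩; exact hφ W hW)
  exact this hf

theorem subtype_upwardClosed {α : Type*} [LE α] {W : Finset α}
    (hW : ∀ x ∈ W, ∀ y, x ≤ y → y ∈ W) (p : α → Prop) [DecidablePred p] :
    ∀ x ∈ W.subtype p, ∀ y, x ≤ y → y ∈ W.subtype p := by
  intro x hx y hxy
  rw [mem_subtype] at hx ⊢
  exact hW x hx y hxy

theorem prod_piEquivPiSubtypeProd_symm {α : Type*} (p : α → Prop) [DecidablePred p]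
    (W : Finset α) (w : {x // p x} → Fˣ) (z : {x // ¬ p x} → Fˣ) :
    ∏ i ∈ W, ((Equiv.piEquivPiSubtypeProd p fun _ => Fˣ).symm (w, z) i : F) =
      (∏ j ∈ W.subtype p, (w j : F)) * ∏ j ∈ W.subtype (¬ p ·), (z j : F) := by
  rw [← prod_filter_mul_prod_filter_not W p, ← prod_subtype_eq_prod_filter,
    ← prod_subtype_eq_prod_filter]
  congr 1 <;> refine prod_congr rfl fun j _ => ?_
  · simp [Equiv.piEquivPiSubtypeProd_symm_apply, j.2]
  · simp [Equiv.piEquivPiSubtypeProd_symm_apply, j.2]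

variable {α : Type*} [Fintype α]

theorem slice_fst_mem_monomialSpan [LE α] {f : (α → Fˣ) → F}
    (hf : f ∈ monomialSpan α (· ≤ ·) F) (p : α → Prop) [DecidablePred p]
    (z : {x // ¬ p x} → Fˣ) :
    (fun w => f ((Equiv.piEquivPiSubtypeProd p fun _ => Fˣ).symm (w, z))) ∈
      monomialSpan {x // p x} (· ≤ ·) F := by
  refine comp_mem_monomialSpan _ (fun W hW => ?_) hf
  simp_rw [prod_piEquivPiSubtypeProd_symm, mul_comm _ (∏ j ∈ W.subtype (¬ p ·), (z j : F))]
  exact Submodule.smul_mem _ _ (prod_mem_monomialSpan (subtype_upwardClosed hW p))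

theorem slice_snd_mem_monomialSpan [LE α] {f : (α → Fˣ) → F}
    (hf : f ∈ monomialSpan α (· ≤ ·) F) (p : α → Prop) [DecidablePred p]
    (w : {x // p x} → Fˣ) :
    (fun z => f ((Equiv.piEquivPiSubtypeProd p fun _ => Fˣ).symm (w, z))) ∈
      monomialSpan {x // ¬ p x} (· ≤ ·) F := by
  refine comp_mem_monomialSpan _ (fun W hW => ?_) hf
  simp_rw [prod_piEquivPiSubtypeProd_symm]
  exact Submodule.smul_mem _ _ (prod_mem_monomialSpan (subtype_upwardClosed hW _))

theorem exists_eq_mul_prod_add_of_forall_le [PartialOrder α] [DecidableEq α] {r : α}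
    (hr : ∀ x, r ≤ x) {f : (α → Fˣ) → F} (hf : f ∈ monomialSpan α (· ≤ ·) F) :
    ∃ (a : F) (g : ({x // x ≠ r} → Fˣ) → F), g ∈ monomialSpan {x // x ≠ r} (· ≤ ·) F ∧
      ∀ x, f x = a * ∏ i, (x i : F) + g (fun j => x j) := by
  let restrict := LinearMap.funLeft F F fun (x : α → Fˣ) (j : {x // x ≠ r}) => x j
  have hle : monomialSpan α (· ≤ ·) F ≤ (F ∙ fun x => ∏ i, (x i : F)) ⊔
      (monomialSpan {x // x ≠ r} (· ≤ ·) F).map restrict := by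
    refine Submodule.span_le.mpr ?_
    rintro _ ⟨W, hW, rfl⟩
    by_cases hrW : r ∈ W
    · obtain rfl : W = univ := eq_univ_of_forall fun y => hW r hrW y (hr y)
      exact Submodule.mem_sup_left (Submodule.mem_span_singleton_self _)
    · refine Submodule.mem_sup_right ⟨_, prod_mem_monomialSpan (subtype_upwardClosed hW _), ?_⟩
      funext x
      exact prod_subtype_of_mem (fun i => (x i : F)) fun i hi h => hrW (h ▸ hi)
  obtain ⟨_, ha, _, ⟨g, hg, rfl⟩, hsum⟩ := Submodule.mem_sup.mp (hle hf)
  obtain ⟨a, rfl⟩ := Submodule.mem_span_singleton.mp ha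
  exact ⟨a, g, hg, fun x => by rw [← hsum]; rfl⟩

theorem prod_sub_one_mem_monomialSpan [PartialOrder α] {M : Finset α} (hM : ∀ y ∈ M, IsMax y) :
    (fun x : α → Fˣ => ∏ y ∈ M, ((x y : F) - 1)) ∈ monomialSpan α (· ≤ ·) F := by
  classical
  have hexp : (fun x : α → Fˣ => ∏ y ∈ M, ((x y : F) - 1)) =
      ∑ S ∈ M.powerset, (-1 : F) ^ #(M \ S) • fun x : α → Fˣ => ∏ y ∈ S, (x y : F) := by
    funext x
    simp [Finset.sum_apply, sub_eq_add_neg, prod_add, mul_comm]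
  rw [hexp]
  refine Submodule.sum_mem _ fun S hS => Submodule.smul_mem _ _ (prod_mem_monomialSpan ?_)
  intro y hy z hyz
  rwa [(hM y (mem_powerset.mp hS hy) hyz).antisymm hyz]

end Span

theorem card_prod_sub_one_ne_zero {α F : Type*} [Fintype α] [Field F] [Fintype F]
    (M : Finset α) :
    Nat.card {x : α → Fˣ // ∏ y ∈ M, ((x y : F) - 1) ≠ 0} =
      (Fintype.card F - 1) ^ (Fintype.card α - #M) * (Fintype.card F - 2) ^ #M := by
  classical
  rw [Nat.card_eq_fintype_card, Fintype.card_subtype]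
  trans #(Fintype.piFinset fun i => if i ∈ M then univ.erase (1 : Fˣ) else univ)
  · congr 1
    ext x
    simp only [mem_filter, mem_univ, true_and, prod_ne_zero_iff, sub_ne_zero,
      Fintype.mem_piFinset]
    refine forall_congr' fun i => ?_
    split_ifs with hi <;> simp [hi, Units.val_eq_one]
  simp only [Fintype.card_piFinset, apply_ite card, card_erase_of_mem, mem_univ, card_univ,
    Fintype.card_units, prod_ite, prod_const, filter_mem_eq_inter, univ_inter, filter_not,
    ← compl_eq_univ_sdiff, card_compl, Nat.sub_sub]
  ring

namespace MinWeightAtLeast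

variable {α F : Type*} [Fintype α] [Field F]

theorem mono [LE α] {d d' : ℕ} (h : MinWeightAtLeast α F d) (hd : d' ≤ d) :
    MinWeightAtLeast α F d' :=
  fun f hf hf0 => hd.trans (h f hf hf0)

theorem one [Fintype F] [LE α] : MinWeightAtLeast α F 1 := by
  classical
  intro f _ hf0
  obtain ⟨x, hx⟩ := Function.ne_iff.mp hf0
  have : Nonempty {x // f x ≠ 0} := ⟨⟨x, hx⟩⟩
  exact Nat.card_pos

theorem mul_compl [Fintype F] [LE α] (p : α → Prop) [DecidablePred p] {dX dY : ℕ}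
    (hX : MinWeightAtLeast {x // p x} F dX) (hY : MinWeightAtLeast {x // ¬ p x} F dY) :
    MinWeightAtLeast α F (dX * dY) := by
  classical
  intro f hf hf0
  let e := Equiv.piEquivPiSubtypeProd p fun _ => Fˣ
  rw [← card_ne_zero_comp_equiv e]
  refine mul_le_card_ne_zero_prod _ (fun z hz => hX _ (slice_fst_mem_monomialSpan hf p z) hz)
    (fun w hw => hY _ (slice_snd_mem_monomialSpan hf p w) hw) fun h => hf0 ?_
  funext x
  simpa using congrFun h (e x)

theorem of_forall_le [Fintype F] [PartialOrder α] [DecidableEq α] {r : α} (hr : ∀ x, r ≤ x)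
    {d : ℕ} (h : MinWeightAtLeast {x // x ≠ r} F d) :
    MinWeightAtLeast α F (min ((Fintype.card F - 1) * d)
      ((Fintype.card F - 2) * (Fintype.card F - 1) ^ (Fintype.card α - 1))) := by
  classical
  intro f hf hf0
  obtain ⟨a, g, hg, hfg⟩ := exists_eq_mul_prod_add_of_forall_le hr hf
  let e := Equiv.funSplitAt r Fˣ
  have hfe : ∀ t z, f (e.symm (t, z)) = a * (∏ j, (z j : F)) * t + g z := by
    intro t z
    have hz : ∀ j : {j // j ≠ r}, (if h : (j : α) = r then t else z ⟨j, h⟩) = z j :=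
      fun j => dif_neg j.2
    rw [hfg, Fintype.prod_eq_mul_prod_subtype_ne _ r]
    simp only [e, Equiv.funSplitAt_symm_apply, hz, dite_true]
    ring
  rw [← card_ne_zero_comp_equiv e]
  simp only [hfe]
  by_cases ha : a = 0
  · refine (min_le_left _ _).trans ?_
    have hg0 : g ≠ 0 := fun h => hf0 (funext fun x => by simp [hfg, ha, h])
    simp only [ha, zero_mul, zero_add]
    rw [card_ne_zero_comp_snd, Nat.card_eq_fintype_card, Fintype.card_units]
    exact Nat.mul_le_mul_left _ (h g hg hg0)
  · refine (min_le_right _ _).trans ?_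
    have hcard : Fintype.card ({x // x ≠ r} → Fˣ) =
        (Fintype.card F - 1) ^ (Fintype.card α - 1) := by
      simp [Fintype.card_units, Fintype.card_subtype_compl]
    rw [card_ne_zero_prod_eq_sum (fun p : Fˣ × ({x // x ≠ r} → Fˣ) =>
      a * (∏ j, (p.2 j : F)) * p.1 + g p.2)]
    calc (Fintype.card F - 2) * (Fintype.card F - 1) ^ (Fintype.card α - 1)
        = ∑ _z : {x // x ≠ r} → Fˣ, (Fintype.card F - 2) := by
          rw [sum_const, card_univ, hcard, smul_eq_mul, mul_comm]
      _ ≤ _ := sum_le_sum fun z _ => sub_two_le_card_mul_add_ne_zero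
          (mul_ne_zero ha (prod_ne_zero_iff.mpr fun j _ => (z j).ne_zero)) _

end MinWeightAtLeast

theorem sub_one_pow_mul_sub_two_pow_le (q : ℕ) {m b c : ℕ} (hcb : c ≤ b) (hbm : b ≤ m) :
    (q - 1) ^ (m - b) * (q - 2) ^ b ≤ (q - 1) ^ (m - c) * (q - 2) ^ c := by
  obtain ⟨k, rfl⟩ := Nat.exists_eq_add_of_le hcb
  rw [show m - c = m - (c + k) + k by omega, pow_add, pow_add]
  calc (q - 1) ^ (m - (c + k)) * ((q - 2) ^ c * (q - 2) ^ k)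
      = (q - 1) ^ (m - (c + k)) * (q - 2) ^ c * (q - 2) ^ k := by ring
    _ ≤ (q - 1) ^ (m - (c + k)) * (q - 2) ^ c * (q - 1) ^ k :=
        Nat.mul_le_mul_left _ (Nat.pow_le_pow_left (by omega) k)
    _ = (q - 1) ^ (m - (c + k)) * (q - 1) ^ k * (q - 2) ^ c := by ring

section Weight

variable (F : Type*) [Fintype F] {α : Type*} [Fintype α] [PartialOrder α]

theorem toricWeight_eq_mul {p : α → Prop} [DecidablePred p] (hup : IsUpperSet {x | p x})
    (hlow : IsLowerSet {x | p x}) :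
    toricWeight F α = toricWeight F {x // p x} * toricWeight F {x // ¬ p x} := by
  have hnp : IsUpperSet {x | ¬ p x} := hlow.compl
  have hmax := card_and_add_card_not_and p (IsMax (α := α))
  rw [← hup.card_isMax_subtype, ← hnp.card_isMax_subtype] at hmax
  have hcard := Fintype.card_subtype_compl p
  have hle := Fintype.card_subtype_le p
  have hX := card_isMax_le_card (α := {x // p x})
  have hY := card_isMax_le_card (α := {x // ¬ p x})
  simp only [toricWeight]
  rw [← hmax, show Fintype.card α - (Nat.card {y : {x // p x} // IsMax y} +
      Nat.card {y : {x // ¬ p x} // IsMax y}) = (Fintype.card {x // p x} -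
      Nat.card {y : {x // p x} // IsMax y}) + (Fintype.card {x // ¬ p x} -
      Nat.card {y : {x // ¬ p x} // IsMax y}) by omega, pow_add, pow_add]
  ring

theorem toricWeight_le_of_forall_le [DecidableEq α] {r : α} (hr : ∀ x, r ≤ x) :
    toricWeight F α ≤ min ((Fintype.card F - 1) * toricWeight F {x // x ≠ r})
      ((Fintype.card F - 2) * (Fintype.card F - 1) ^ (Fintype.card α - 1)) := by
  have hne : IsUpperSet {x | x ≠ r} := fun a b hab ha hb => ha (le_antisymm (hb ▸ hab) (hr a))
  have hmax := card_and_add_card_not_and (· ≠ r) (IsMax (α := α))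
  rw [← hne.card_isMax_subtype] at hmax
  obtain ⟨y, hy⟩ := Set.finite_univ.exists_maximal ⟨r, trivial⟩
  have hpos : 0 < Nat.card {y : α // IsMax y} :=
    Nat.card_pos_iff.mpr ⟨⟨⟨y, by simpa using hy⟩⟩, inferInstance⟩
  have hcard : Fintype.card {x // x ≠ r} = Fintype.card α - 1 := by
    rw [Fintype.card_subtype_compl, Fintype.card_subtype_eq]
  have hb := card_isMax_le_card (α := α)
  have hb' := card_isMax_le_card (α := {x // x ≠ r})
  simp only [toricWeight]
  rw [hcard] at hb' ⊢
  set b' := Nat.card {y : {x // x ≠ r} // IsMax y}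
  refine le_min ?_ ?_
  · refine (sub_one_pow_mul_sub_two_pow_le _ (c := b') (by omega) hb).trans_eq ?_
    rw [show Fintype.card α - b' = Fintype.card α - 1 - b' + 1 by omega, pow_succ]
    ring
  · refine (sub_one_pow_mul_sub_two_pow_le _ (c := 1) (by omega) hb).trans_eq ?_
    ring

end Weight

theorem IsForestOrder.minWeightAtLeast_toricWeight (F : Type*) [Field F] [Fintype F]
    {α : Type*} [Fintype α] [PartialOrder α] (hα : IsForestOrder α) :
    MinWeightAtLeast α F (toricWeight F α) := by
  classical
  induction hn : Fintype.card α using Nat.strong_induction_on generalizing α with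
  | _ n ih =>
  rcases isEmpty_or_nonempty α with hempty | ⟨⟨x₀⟩⟩
  · exact MinWeightAtLeast.one.mono (by simp [toricWeight])
  obtain ⟨r, hr⟩ := Set.finite_univ.exists_minimal ⟨x₀, trivial⟩
  replace hr : IsMin r := by simpa using hr
  by_cases hleast : ∀ x, r ≤ x
  · have hlt : Fintype.card {x // x ≠ r} < n :=
      hn ▸ Fintype.card_subtype_lt (p := (· ≠ r)) (not_not.mpr rfl)
    exact (MinWeightAtLeast.of_forall_le hleast (ih _ hlt (hα.subtype _) rfl)).mono
      (toricWeight_le_of_forall_le F hleast)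
  · obtain ⟨y, hy⟩ := not_forall.mp hleast
    have hX : Fintype.card {x // r ≤ x} < n := hn ▸ Fintype.card_subtype_lt (p := (r ≤ ·)) hy
    have hY : Fintype.card {x // ¬ r ≤ x} < n :=
      hn ▸ Fintype.card_subtype_lt (p := (¬ r ≤ ·)) (not_not.mpr le_rfl)
    rw [toricWeight_eq_mul F (p := (r ≤ ·)) (isUpperSet_Ici r) (hα.isLowerSet_Ici hr)]
    exact MinWeightAtLeast.mul_compl _ (ih _ hX (hα.subtype _) rfl) (ih _ hY (hα.subtype _) rfl)

theorem exists_card_ne_zero_eq_toricWeight (F : Type*) [Field F] [Fintype F]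
    (hq : 3 ≤ Fintype.card F) (α : Type*) [Fintype α] [PartialOrder α] :
    ∃ f ∈ monomialSpan α (· ≤ ·) F, f ≠ 0 ∧ Nat.card {x // f x ≠ 0} = toricWeight F α := by
  classical
  let M : Finset α := {y | IsMax y}
  have hM : #M = Nat.card {y : α // IsMax y} := by
    simp [M, Nat.card_eq_fintype_card, Fintype.card_subtype]
  have hcount := card_prod_sub_one_ne_zero (F := F) M
  rw [hM] at hcount
  refine ⟨_, prod_sub_one_mem_monomialSpan fun y hy => (mem_filter.mp hy).2, fun hf0 => ?_,
    hcount⟩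
  have hpos : 0 < toricWeight F α := Nat.mul_pos (pow_pos (by omega) _) (pow_pos (by omega) _)
  rw [toricWeight, ← hcount] at hpos
  obtain ⟨⟨x, hx⟩⟩ := (Nat.card_pos_iff.mp hpos).1
  exact hx (congrFun hf0 x)

theorem toricMinDist_eq {α F : Type*} [Fintype α] [LE α] [Field F] [Fintype F] {d : ℕ}
    (hlow : MinWeightAtLeast α F d)
    (hattain : ∃ f ∈ monomialSpan α (· ≤ ·) F, f ≠ 0 ∧ Nat.card {x // f x ≠ 0} = d) :
    toricMinDist α (· ≤ ·) F = d := by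
  classical
  have htotal : ∀ g : (α → Fˣ) → F, Nat.card {x // g x = 0} + Nat.card {x // g x ≠ 0} =
      (Fintype.card F - 1) ^ Fintype.card α := by
    intro g
    rw [Nat.card_eq_fintype_card, Nat.card_eq_fintype_card, Fintype.card_subtype,
      Fintype.card_subtype, card_filter_add_card_filter_not, card_univ, Fintype.card_fun,
      Fintype.card_units]
  obtain ⟨f₀, hf₀, hf₀0, hcard⟩ := hattain
  have hf₀total := htotal f₀
  have hgreatest : IsGreatest {n | ∃ g ∈ monomialSpan α (· ≤ ·) F, g ≠ 0 ∧
      n = Nat.card {x : α → Fˣ // g x = 0}} ((Fintype.card F - 1) ^ Fintype.card α - d) := by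
    refine ⟨⟨f₀, hf₀, hf₀0, by omega⟩, ?_⟩
    rintro _ ⟨g, hg, hg0, rfl⟩
    have := hlow g hg hg0
    have := htotal g
    omega
  rw [toricMinDist, hgreatest.csSup_eq]
  omega

/-- Let `q > 3` be a prime power (realized as the cardinality of a finite
field `F`) and let `P` be a rooted tree poset with `m` elements (a finite poset with a least
element `root` such that every other element covers a unique element).  Writing `b` for the
number of maximal elements of `P` (which equals `Σ (m_i - 1)` over the shrubbery
`S_{m_1}, …, S_{m_s}` of `P`), the minimum distance of the toric code of the order polytope
of `P` is `(q-1)^(m-b) * (q-2)^b`. -/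
theorem stmt0 (q m : ℕ) (hq : 3 < q)
    (F : Type) [Field F] [Fintype F] (hF : Fintype.card F = q)
    (α : Type) [Fintype α] [PartialOrder α] (hm : Fintype.card α = m)
    (root : α) (hroot : ∀ x : α, root ≤ x)
    (htree : ∀ y : α, y ≠ root → ∃! x : α, x ⋖ y)
    (b : ℕ) (hb : b = Nat.card {y : α // IsMax y}) :
    toricMinDist α (· ≤ ·) F = (q - 1) ^ (m - b) * (q - 2) ^ b := by
  subst hF hm hb
  have hforest : IsForestOrder α := isForestOrder_of_existsUnique_covBy fun y hy =>
    htree y (by rintro rfl; exact hy fun x _ => hroot x)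
  exact toricMinDist_eq (hforest.minWeightAtLeast_toricWeight F)
    (exists_card_ne_zero_eq_toricWeight F hq.le α)
end

section
/- Let q > 2 be a prime power and let P be a finite poset with connected components P_1, …, P_r. Then the minimum distance of the toric code C_{O_P} satisfies d(C_{O_P}) = d(C_{O_{P_1}}) · d(C_{O_{P_2}}) ⋯ d(C_{O_{P_r}}). -/
open Finset

/-- A poset is connected if any two elements are joined by a path of comparabilities. -/
def PosetConnected {α : Type*} (le : α → α → Prop) : Prop :=
  ∀ a b : α, Relation.ReflTransGen (fun x y => le x y ∨ le y x) a b

/-- The disjoint union order on a sigma type. -/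
def sigmaLE {ι : Type*} {β : ι → Type*} (le : ∀ i, β i → β i → Prop) :
    (Σ i, β i) → (Σ i, β i) → Prop
  | ⟨i, a⟩, ⟨j, b⟩ => ∃ h : i = j, le j (h ▸ a) b

section Aux

variable (F : Type) [Field F]

/-- The set of monomials attached to upper order ideals. -/
def monSet (α : Type) (le : α → α → Prop) : Set ((α → Fˣ) → F) :=
  {g : (α → Fˣ) → F | ∃ W : Finset α, (∀ x ∈ W, ∀ y, le x y → y ∈ W) ∧
      g = fun x => ∏ i ∈ W, (x i : F)}

/-- The set of numbers of nonvanishing points of nonzero elements of the span of `S`. -/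
def NSet {X : Type} (S : Set (X → F)) : Set ℕ :=
  {n | ∃ g ∈ Submodule.span F S, g ≠ 0 ∧ n = Nat.card {x : X // g x ≠ 0}}

lemma one_mem_monSet (α : Type) (le : α → α → Prop) : (1 : (α → Fˣ) → F) ∈ monSet F α le :=
  ⟨∅, by simp, by simp [Pi.one_def]⟩

lemma one_ne_zero_fun (α : Type) : (1 : (α → Fˣ) → F) ≠ 0 := by
  intro h
  have := congrFun h (fun _ => 1)
  simp at this

lemma NSet_nonempty (α : Type) [Finite α] (le : α → α → Prop) :
    (NSet F (monSet F α le)).Nonempty :=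
  ⟨_, 1, Submodule.subset_span (one_mem_monSet F α le), one_ne_zero_fun F α, rfl⟩

lemma card_zero_add_card_ne {X : Type} [Finite X] (g : X → F) :
    Nat.card {x // g x = 0} + Nat.card {x // g x ≠ 0} = Nat.card X := by
  classical
  cases nonempty_fintype X
  simp only [Nat.card_eq_fintype_card, Fintype.card_subtype]
  rw [Finset.card_filter_add_card_filter_not (p := fun x => g x = 0), Finset.card_univ]

lemma toricMinDist_eq_s2 (α : Type) [Fintype α] (le : α → α → Prop) [Fintype F] :
    toricMinDist α le F = sInf (NSet F (monSet F α le)) := by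
  classical
  set T := Nat.card (α → Fˣ) with hT
  have hTot : (Fintype.card F - 1) ^ Fintype.card α = T := by
    rw [hT, Nat.card_fun, Nat.card_units, Nat.card_eq_fintype_card, Nat.card_eq_fintype_card]
  have hmem : ∀ n ∈ NSet F (monSet F α le), n ≤ T := by
    rintro n ⟨g, hg, hg0, rfl⟩
    exact hT ▸ Nat.card_le_card_of_injective _ Subtype.val_injective
  have hZset : {n : ℕ | ∃ g ∈ monomialSpan α le F, g ≠ 0 ∧
        n = Nat.card {x : α → Fˣ // g x = 0}}
      = (fun n => T - n) '' NSet F (monSet F α le) := by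
    ext n
    constructor
    · rintro ⟨g, hg, hg0, rfl⟩
      refine ⟨Nat.card {x // g x ≠ 0}, ⟨g, hg, hg0, rfl⟩, ?_⟩
      have := card_zero_add_card_ne F g
      dsimp only
      omega
    · rintro ⟨m, ⟨g, hg, hg0, rfl⟩, rfl⟩
      refine ⟨g, hg, hg0, ?_⟩
      have := card_zero_add_card_ne F g
      dsimp only
      omega
  have hne := NSet_nonempty F α le
  set n0 := sInf (NSet F (monSet F α le)) with hn0
  have hmemn0 : n0 ∈ NSet F (monSet F α le) := Nat.sInf_mem hne
  have hsup : sSup ((fun n => T - n) '' NSet F (monSet F α le)) = T - n0 := by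
    apply le_antisymm
    · apply csSup_le (hne.image _)
      rintro z ⟨m, hm, rfl⟩
      exact Nat.sub_le_sub_left (Nat.sInf_le hm) T
    · exact le_csSup ⟨T, by rintro z ⟨m, hm, rfl⟩; exact Nat.sub_le _ _⟩ ⟨n0, hmemn0, rfl⟩
  have := hmem _ hmemn0
  unfold toricMinDist
  rw [hZset, hsup, hTot]
  omega

end Aux

section Aux2

variable (F : Type) [Field F]

/-- Precomposition with a map of point sets, as a linear map. -/
def precompL {X X' : Type} (e : X' → X) : ((X → F) →ₗ[F] (X' → F)) where
  toFun g := g ∘ e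
  map_add' _ _ := rfl
  map_smul' _ _ := rfl

lemma NSet_transport {X X' : Type} (e : X' ≃ X) (S : Set (X → F)) :
    NSet F ((fun g : X → F => g ∘ e) '' S) = NSet F S := by
  have hspan : Submodule.span F ((fun g : X → F => g ∘ e) '' S)
      = (Submodule.span F S).map (precompL F e) := by
    rw [Submodule.map_span]; rfl
  have hcard : ∀ g : X → F, Nat.card {x' : X' // (g ∘ e) x' ≠ 0}
      = Nat.card {x : X // g x ≠ 0} :=
    fun g => Nat.card_congr (Equiv.subtypeEquiv e fun x => Iff.rfl)
  ext n
  constructor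
  · rintro ⟨f, hf, hf0, rfl⟩
    rw [hspan, Submodule.mem_map] at hf
    obtain ⟨g, hg, rfl⟩ := hf
    refine ⟨g, hg, ?_, by exact hcard g⟩
    rintro rfl
    exact hf0 (map_zero _)
  · rintro ⟨g, hg, hg0, rfl⟩
    refine ⟨g ∘ e, ?_, ?_, (hcard g).symm⟩
    · rw [hspan]
      exact Submodule.mem_map_of_mem hg
    · intro h
      apply hg0
      funext x
      have := congrFun h (e.symm x)
      simpa using this

/-- Tensor products of two sets of functions. -/
def tenSet {X Y : Type} (S : Set (X → F)) (S' : Set (Y → F)) : Set (X × Y → F) :=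
  {g | ∃ a ∈ S, ∃ b ∈ S', g = fun p => a p.1 * b p.2}

lemma ten_mem_span {X Y : Type} {S : Set (X → F)} {S' : Set (Y → F)} {a : X → F} {b : Y → F}
    (ha : a ∈ Submodule.span F S) (hb : b ∈ Submodule.span F S') :
    (fun p : X × Y => a p.1 * b p.2) ∈ Submodule.span F (tenSet F S S') := by
  induction ha using Submodule.span_induction with
  | mem a' ha' =>
    induction hb using Submodule.span_induction with
    | mem b' hb' => exact Submodule.subset_span ⟨a', ha', b', hb', rfl⟩
    | zero =>
      have : (fun p : X × Y => a' p.1 * (0 : Y → F) p.2) = 0 := by funext p; simp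
      rw [this]; exact zero_mem _
    | add b1 b2 hb1 hb2 ih1 ih2 =>
      have : (fun p : X × Y => a' p.1 * (b1 + b2) p.2)
          = (fun p : X × Y => a' p.1 * b1 p.2) + fun p : X × Y => a' p.1 * b2 p.2 := by
        funext p; simp [mul_add]
      rw [this]; exact add_mem ih1 ih2
    | smul c b' hb' ih =>
      have : (fun p : X × Y => a' p.1 * (c • b') p.2)
          = c • fun p : X × Y => a' p.1 * b' p.2 := by
        funext p; simp only [Pi.smul_apply, smul_eq_mul]; ring
      rw [this]; exact Submodule.smul_mem _ _ ih
  | zero =>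
    have : (fun p : X × Y => (0 : X → F) p.1 * b p.2) = 0 := by funext p; simp
    rw [this]; exact zero_mem _
  | add a1 a2 ha1 ha2 ih1 ih2 =>
    have : (fun p : X × Y => (a1 + a2) p.1 * b p.2)
        = (fun p : X × Y => a1 p.1 * b p.2) + fun p : X × Y => a2 p.1 * b p.2 := by
      funext p; simp [add_mul]
    rw [this]; exact add_mem ih1 ih2
  | smul c a' ha' ih =>
    have : (fun p : X × Y => (c • a') p.1 * b p.2)
        = c • fun p : X × Y => a' p.1 * b p.2 := by
      funext p; simp only [Pi.smul_apply, smul_eq_mul]; ring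
    rw [this]; exact Submodule.smul_mem _ _ ih

lemma NSet_ten {X Y : Type} [Finite X] [Finite Y] (S : Set (X → F)) (S' : Set (Y → F))
    (hA : (NSet F S).Nonempty) (hB : (NSet F S').Nonempty) :
    sInf (NSet F (tenSet F S S')) = sInf (NSet F S) * sInf (NSet F S') := by
  classical
  obtain ⟨a, ha, ha0, hna⟩ := Nat.sInf_mem hA
  obtain ⟨b, hb, hb0, hnb⟩ := Nat.sInf_mem hB
  set NA := sInf (NSet F S) with hNA
  set NB := sInf (NSet F S') with hNB
  have hprod_mem : NA * NB ∈ NSet F (tenSet F S S') := by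
    refine ⟨fun p => a p.1 * b p.2, ten_mem_span F ha hb, ?_, ?_⟩
    · obtain ⟨x, hx⟩ : ∃ x, a x ≠ 0 := by
        by_contra h; push_neg at h; exact ha0 (funext h)
      obtain ⟨y, hy⟩ : ∃ y, b y ≠ 0 := by
        by_contra h; push_neg at h; exact hb0 (funext h)
      intro h
      have := congrFun h (x, y)
      simp only [Pi.zero_apply] at this
      exact (mul_ne_zero hx hy) this
    · rw [hna, hnb, ← Nat.card_prod]
      refine Nat.card_congr ?_
      exact ((Equiv.subtypeEquivRight (fun p : X × Y => show (a p.1 * b p.2 ≠ 0) ↔ _ from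
        mul_ne_zero_iff)).trans (Equiv.subtypeProdEquivProd (p := fun x => a x ≠ 0) (q := fun y => b y ≠ 0))).symm
  have hlow : ∀ n ∈ NSet F (tenSet F S S'), NA * NB ≤ n := by
    rintro n ⟨f, hf, hf0, rfl⟩
    have hslice : (∀ x, (fun y => f (x, y)) ∈ Submodule.span F S') ∧
        (∀ y, (fun x => f (x, y)) ∈ Submodule.span F S) := by
      clear hf0
      induction hf using Submodule.span_induction with
      | mem g hg =>
        obtain ⟨a', ha', b', hb', rfl⟩ := hg
        constructor
        · intro x
          have : (fun y => a' x * b' y) = a' x • b' := by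
            funext y; simp [smul_eq_mul]
          rw [this]
          exact Submodule.smul_mem _ _ (Submodule.subset_span hb')
        · intro y
          have : (fun x => a' x * b' y) = b' y • a' := by
            funext x; simp [smul_eq_mul, mul_comm]
          rw [this]
          exact Submodule.smul_mem _ _ (Submodule.subset_span ha')
      | zero => constructor <;> intro <;> · simp only [Pi.zero_apply]; exact zero_mem _
      | add f1 f2 h1 h2 ih1 ih2 =>
        constructor
        · intro x
          have : (fun y => (f1 + f2) (x, y)) = (fun y => f1 (x, y)) + fun y => f2 (x, y) := rfl
          rw [this]; exact add_mem (ih1.1 x) (ih2.1 x)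
        · intro y
          have : (fun x => (f1 + f2) (x, y)) = (fun x => f1 (x, y)) + fun x => f2 (x, y) := rfl
          rw [this]; exact add_mem (ih1.2 y) (ih2.2 y)
      | smul c f' h ih =>
        constructor
        · intro x
          have : (fun y => (c • f') (x, y)) = c • fun y => f' (x, y) := rfl
          rw [this]; exact Submodule.smul_mem _ _ (ih.1 x)
        · intro y
          have : (fun x => (c • f') (x, y)) = c • fun x => f' (x, y) := rfl
          rw [this]; exact Submodule.smul_mem _ _ (ih.2 y)
    obtain ⟨⟨x0, y0⟩, hxy⟩ : ∃ p, f p ≠ 0 := by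
      by_contra h; push_neg at h; exact hf0 (funext h)
    letI : Fintype X := Fintype.ofFinite X
    letI : Fintype Y := Fintype.ofFinite Y
    have hcount : Nat.card {p : X × Y // f p ≠ 0}
        = ∑ x : X, Nat.card {y : Y // f (x, y) ≠ 0} := by
      rw [Nat.card_congr ((Equiv.subtypeEquivRight (q := fun p : X × Y => f (p.1, p.2) ≠ 0)
          (fun p => Iff.rfl)).trans
        (Equiv.subtypeProdEquivSigmaSubtype (fun x y => f (x, y) ≠ 0)))]
      simp [Nat.card_eq_fintype_card]
    have hx0 : NA ≤ (univ.filter (fun x => f (x, y0) ≠ 0)).card := by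
      have hmem : Nat.card {x // f (x, y0) ≠ 0} ∈ NSet F S :=
        ⟨fun x => f (x, y0), hslice.2 y0, fun h => hxy (congrFun h x0), rfl⟩
      have := Nat.sInf_le hmem
      rw [hNA]
      simpa [Nat.card_eq_fintype_card, Fintype.card_subtype] using this
    have hy : ∀ x, f (x, y0) ≠ 0 → NB ≤ Nat.card {y // f (x, y) ≠ 0} := fun x hx =>
      Nat.sInf_le ⟨fun y => f (x, y), hslice.1 x, fun h => hx (congrFun h y0), rfl⟩
    rw [hcount]
    calc NA * NB ≤ (univ.filter (fun x => f (x, y0) ≠ 0)).card * NB :=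
          Nat.mul_le_mul_right _ hx0
      _ ≤ ∑ x ∈ univ.filter (fun x => f (x, y0) ≠ 0), Nat.card {y : Y // f (x, y) ≠ 0} := by
          rw [← smul_eq_mul]
          exact Finset.card_nsmul_le_sum _ _ _ (fun x hx => hy x (by simpa using hx))
      _ ≤ ∑ x : X, Nat.card {y : Y // f (x, y) ≠ 0} :=
          Finset.sum_le_sum_of_subset (Finset.filter_subset _ _)
  exact le_antisymm (Nat.sInf_le hprod_mem) (le_csInf ⟨_, hprod_mem⟩ hlow)

end Aux2

section Aux3

variable (F : Type) [Field F]

variable (r : ℕ) (β : Fin (r + 1) → Type)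

/-- Splitting the point space of a sigma type. -/
def pe : ((β 0 → Fˣ) × ((Σ i : Fin r, β i.succ) → Fˣ)) ≃ ((Σ i, β i) → Fˣ) where
  toFun p s := Fin.cases (motive := fun i => β i → Fˣ) p.1 (fun i a => p.2 ⟨i, a⟩) s.1 s.2
  invFun x := (fun a => x ⟨0, a⟩, fun t => x ⟨t.1.succ, t.2⟩)
  left_inv p := by
    refine Prod.ext ?_ ?_
    · funext a; simp
    · funext t; obtain ⟨i, a⟩ := t; simp
  right_inv x := by
    funext s
    obtain ⟨i, a⟩ := s
    revert a
    induction i using Fin.cases with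
    | zero => intro a; simp
    | succ k => intro a; simp

/-- Splitting the index set of a sigma type. -/
def ie : (β 0 ⊕ (Σ i : Fin r, β i.succ)) ≃ (Σ i, β i) where
  toFun := Sum.elim (fun a => ⟨0, a⟩) (fun t => ⟨t.1.succ, t.2⟩)
  invFun s := Fin.cases (motive := fun i => β i → (β 0 ⊕ (Σ i : Fin r, β i.succ)))
    Sum.inl (fun i a => Sum.inr ⟨i, a⟩) s.1 s.2
  left_inv c := by
    cases c with
    | inl a => simp
    | inr t => obtain ⟨i, a⟩ := t; simp
  right_inv s := by
    obtain ⟨i, a⟩ := s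
    revert a
    induction i using Fin.cases with
    | zero => intro a; simp
    | succ k => intro a; simp

variable [∀ i, Fintype (β i)]

lemma mon_fact (W : Finset (Σ i, β i)) (U : Finset (β 0)) (V : Finset (Σ i : Fin r, β i.succ))
    (hU : ∀ a : β 0, a ∈ U ↔ (⟨0, a⟩ : Σ i, β i) ∈ W)
    (hV : ∀ t : Σ i : Fin r, β i.succ, t ∈ V ↔ (⟨t.1.succ, t.2⟩ : Σ i, β i) ∈ W) :
    (fun p : (β 0 → Fˣ) × ((Σ i : Fin r, β i.succ) → Fˣ) =>
        ∏ s ∈ W, ((pe F r β p) s : F))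
      = fun p => (∏ a ∈ U, (p.1 a : F)) * ∏ t ∈ V, (p.2 t : F) := by
  classical
  funext p
  have h1 : ∀ a : β 0, pe F r β p ⟨0, a⟩ = p.1 a := fun a => by simp [pe]
  have h2 : ∀ t : Σ i : Fin r, β i.succ, pe F r β p ⟨t.1.succ, t.2⟩ = p.2 t := by
    rintro ⟨i, a⟩; simp [pe]
  calc ∏ s ∈ W, ((pe F r β p) s : F)
      = ∏ s : (Σ i, β i), (if s ∈ W then ((pe F r β p) s : F) else 1) :=
        (Fintype.prod_ite_mem W (fun s => ((pe F r β p) s : F))).symm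
    _ = (∏ a : β 0, if (⟨0, a⟩ : Σ i, β i) ∈ W then ((pe F r β p) ⟨0, a⟩ : F) else 1)
        * ∏ t : (Σ i : Fin r, β i.succ),
            if (⟨t.1.succ, t.2⟩ : Σ i, β i) ∈ W then ((pe F r β p) ⟨t.1.succ, t.2⟩ : F) else 1 := by
        rw [← Fintype.prod_equiv (ie r β)
          (fun c => if (ie r β c) ∈ W then ((pe F r β p) (ie r β c) : F) else 1)
          (fun s => if s ∈ W then ((pe F r β p) s : F) else 1) (fun c => rfl),
          Fintype.prod_sum_type]
        rfl
    _ = (∏ a : β 0, if a ∈ U then (p.1 a : F) else 1)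
        * ∏ t : (Σ i : Fin r, β i.succ), if t ∈ V then (p.2 t : F) else 1 := by
        congr 1
        · refine Fintype.prod_congr _ _ fun a => ?_
          rw [h1 a]
          exact (if_congr (hU a) rfl rfl).symm
        · refine Fintype.prod_congr _ _ fun t => ?_
          rw [h2 t]
          exact (if_congr (hV t) rfl rfl).symm
    _ = (∏ a ∈ U, (p.1 a : F)) * ∏ t ∈ V, (p.2 t : F) := by
        rw [Fintype.prod_ite_mem U, Fintype.prod_ite_mem V]

lemma struct (le : ∀ i, β i → β i → Prop) :
    (fun g : ((Σ i, β i) → Fˣ) → F => g ∘ (pe F r β)) '' (monSet F (Σ i, β i) (sigmaLE le))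
      = tenSet F (monSet F (β 0) (le 0))
          (monSet F (Σ i : Fin r, β i.succ) (sigmaLE (fun i => le i.succ))) := by
  classical
  ext g
  constructor
  · rintro ⟨-, ⟨W, hW, rfl⟩, rfl⟩
    refine ⟨fun u => ∏ a ∈ univ.filter (fun a : β 0 => (⟨0, a⟩ : Σ i, β i) ∈ W), (u a : F),
      ⟨_, ?_, rfl⟩,
      fun v => ∏ t ∈ univ.filter (fun t : Σ i : Fin r, β i.succ =>
        (⟨t.1.succ, t.2⟩ : Σ i, β i) ∈ W), (v t : F),
      ⟨_, ?_, rfl⟩, ?_⟩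
    · intro a ha b hab
      simp only [Finset.mem_filter, Finset.mem_univ, true_and] at ha ⊢
      exact hW _ ha ⟨0, b⟩ ⟨rfl, hab⟩
    · rintro ⟨i, c⟩ hc ⟨j, d⟩ hcd
      obtain ⟨rfl, h⟩ := hcd
      simp only [Finset.mem_filter, Finset.mem_univ, true_and] at hc ⊢
      exact hW _ hc ⟨i.succ, d⟩ ⟨rfl, h⟩
    · exact mon_fact F r β W _ _ (fun a => by simp) (fun t => by simp)
  · rintro ⟨-, ⟨U, hU, rfl⟩, -, ⟨V, hV, rfl⟩, rfl⟩
    have hinj0 : Function.Injective (fun a : β 0 => (⟨0, a⟩ : Σ i, β i)) := by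
      intro a b h
      simpa using h
    have hinjS : Function.Injective
        (fun t : (Σ i : Fin r, β i.succ) => (⟨t.1.succ, t.2⟩ : Σ i, β i)) := by
      rintro ⟨i, a⟩ ⟨j, b⟩ h
      simp only [Sigma.mk.inj_iff] at h
      obtain ⟨h1, h2⟩ := h
      cases Fin.succ_injective _ h1
      simpa using h2
    set W : Finset (Σ i, β i) :=
      U.map ⟨_, hinj0⟩ ∪ V.map ⟨_, hinjS⟩ with hWdef
    have hU' : ∀ a : β 0, a ∈ U ↔ (⟨0, a⟩ : Σ i, β i) ∈ W := by
      intro a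
      constructor
      · intro ha
        exact Finset.mem_union_left _ (Finset.mem_map_of_mem _ ha)
      · intro ha
        rcases Finset.mem_union.mp ha with h | h
        · obtain ⟨a', ha', heq⟩ := Finset.mem_map.mp h
          cases hinj0 heq
          exact ha'
        · obtain ⟨t, _, heq⟩ := Finset.mem_map.mp h
          exact absurd (Sigma.mk.inj_iff.mp heq).1 (Fin.succ_ne_zero _)
    have hV' : ∀ t : Σ i : Fin r, β i.succ,
        t ∈ V ↔ (⟨t.1.succ, t.2⟩ : Σ i, β i) ∈ W := by
      intro t
      constructor
      · intro ht
        exact Finset.mem_union_right _ (Finset.mem_map_of_mem _ ht)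
      · intro ht
        rcases Finset.mem_union.mp ht with h | h
        · obtain ⟨a', _, heq⟩ := Finset.mem_map.mp h
          exact absurd (Sigma.mk.inj_iff.mp heq).1.symm (Fin.succ_ne_zero _)
        · obtain ⟨t', ht', heq⟩ := Finset.mem_map.mp h
          cases hinjS heq
          exact ht'
    have hWideal : ∀ x ∈ W, ∀ y, sigmaLE le x y → y ∈ W := by
      rintro ⟨i, c⟩ hc ⟨j, d⟩ hcd
      obtain ⟨rfl, h⟩ := hcd
      induction i using Fin.cases with
      | zero =>
        exact (hU' d).mp (hU c ((hU' c).mpr hc) d h)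
      | succ k =>
        exact (hV' ⟨k, d⟩).mp (hV ⟨k, c⟩ ((hV' ⟨k, c⟩).mpr hc) ⟨k, d⟩ ⟨rfl, h⟩)
    exact ⟨_, ⟨W, hWideal, rfl⟩, by exact mon_fact F r β W U V hU' hV'⟩

end Aux3

section Aux4

variable (F : Type) [Field F]

lemma empty_case (α : Type) [IsEmpty α] (le : α → α → Prop) :
    sInf (NSet F (monSet F α le)) = 1 := by
  have h1 : (1 : ℕ) ∈ NSet F (monSet F α le) := by
    refine ⟨1, Submodule.subset_span (one_mem_monSet F α le), one_ne_zero_fun F α, ?_⟩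
    have : ∀ x : α → Fˣ, (1 : (α → Fˣ) → F) x ≠ 0 := fun x => one_ne_zero
    rw [Nat.card_congr (Equiv.subtypeUnivEquiv this)]
    exact (Nat.card_unique).symm
  refine le_antisymm (Nat.sInf_le h1) (le_csInf ⟨1, h1⟩ ?_)
  rintro n ⟨g, hg, hg0, rfl⟩
  obtain ⟨x, hx⟩ : ∃ x, g x ≠ 0 := by
    by_contra h; push_neg at h; exact hg0 (funext h)
  have : Nat.card {x : α → Fˣ // g x ≠ 0} ≠ 0 :=
    Nat.card_ne_zero.mpr ⟨⟨⟨x, hx⟩⟩, inferInstance⟩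
  omega

lemma key [Fintype F] (r : ℕ) : ∀ (β : Fin r → Type) [∀ i, Fintype (β i)]
    (le : ∀ i, β i → β i → Prop),
    sInf (NSet F (monSet F (Σ i, β i) (sigmaLE le)))
      = ∏ i, sInf (NSet F (monSet F (β i) (le i))) := by
  induction r with
  | zero =>
    intro β instF le
    haveI : IsEmpty (Σ i : Fin 0, β i) := ⟨fun s => s.1.elim0⟩
    rw [empty_case]
    simp
  | succ n ih =>
    intro β instF le
    letI := instF
    rw [← NSet_transport F (pe F n β) (monSet F (Σ i, β i) (sigmaLE le)), struct,
      NSet_ten F _ _ (NSet_nonempty F _ _) (NSet_nonempty F _ _),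
      ih (fun i => β i.succ) (fun i => le i.succ), Fin.prod_univ_succ]

end Aux4


/-- Let `q > 2` be a prime power (realized as the cardinality of a finite
field `F`) and let `P` be a finite poset with connected components `P_1, …, P_r` (so `P` is
the disjoint union of the connected posets `P_i`).  Then the minimum distance of the toric
code of the order polytope of `P` is the product of those of its components. -/
theorem stmt2 (q : ℕ) (hq : 2 < q)
    (F : Type) [Field F] [Fintype F] (hF : Fintype.card F = q)
    (r : ℕ) (β : Fin r → Type) [∀ i, Fintype (β i)] [∀ i, PartialOrder (β i)]
    (hconn : ∀ i, PosetConnected (fun a b : β i => a ≤ b)) :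
    toricMinDist (Σ i, β i) (sigmaLE (fun i (a b : β i) => a ≤ b)) F
      = ∏ i, toricMinDist (β i) (· ≤ ·) F := by
  rw [toricMinDist_eq_s2 F (Σ i, β i) (sigmaLE (fun i (a b : β i) => a ≤ b)),
    key F r β (fun i (a b : β i) => a ≤ b)]
  exact Finset.prod_congr rfl (fun i _ => (toricMinDist_eq_s2 F (β i) (· ≤ ·)).symm)
end

section
/- Let P be a finite poset with m elements and connected components P_1, …, P_r. Then, under the partition of the coordinates of ℚ^m according to the components, the poset polytope of P is the free sum of the poset polytopes of its components: H_P = H_{P_1} ⊕ H_{P_2} ⊕ ⋯ ⊕ H_{P_r}. -/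
/-- `y` covers `x` with respect to the order relation `le`. -/
def RelCovBy {α : Type*} (le : α → α → Prop) (x y : α) : Prop :=
  le x y ∧ x ≠ y ∧ ∀ z, le x z → le z y → z = x ∨ z = y

/-- The poset polytope `H_P` of the poset `(α, le)`: the convex hull in `ℚ^α` of the vectors
`e_x` for `x` maximal (covers `x ⋖ 1̂`), `e_x - e_y` for covers `x ⋖ y` in `P`, and `-e_y`
for `y` minimal (covers `0̂ ⋖ y`). -/
def posetPolytope {α : Type*} [DecidableEq α] (le : α → α → Prop) : Set (α → ℚ) :=
  convexHull ℚ
    ({f : α → ℚ | ∃ x, (∀ y, le x y → y = x) ∧ f = Pi.single x 1} ∪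
     {f : α → ℚ | ∃ x y, RelCovBy le x y ∧ f = Pi.single x 1 - Pi.single y 1} ∪
     {f : α → ℚ | ∃ y, (∀ x, le x y → x = y) ∧ f = -Pi.single y 1})

section Aux

variable {α : Type*} [DecidableEq α]

/-- The generating set of the poset polytope. -/
def genSet (le : α → α → Prop) : Set (α → ℚ) :=
  {f : α → ℚ | ∃ x, (∀ y, le x y → y = x) ∧ f = Pi.single x 1} ∪
  {f : α → ℚ | ∃ x y, RelCovBy le x y ∧ f = Pi.single x 1 - Pi.single y 1} ∪
  {f : α → ℚ | ∃ y, (∀ x, le x y → x = y) ∧ f = -Pi.single y 1}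

lemma posetPolytope_eq (le : α → α → Prop) :
    posetPolytope le = convexHull ℚ (genSet le) := rfl

end Aux

variable {ι : Type*} [DecidableEq ι] {β : ι → Type*} [∀ i, DecidableEq (β i)]

/-- The coordinate embedding for component `i`. -/
def embL (β : ι → Type*) [∀ i, DecidableEq (β i)] (i : ι) :
    ((β i → ℚ)) →ₗ[ℚ] ((Σ j, β j) → ℚ) where
  toFun g := fun p => if h : p.1 = i then g (h ▸ p.2) else 0
  map_add' g₁ g₂ := by
    funext p; by_cases h : p.1 = i <;> simp [h]
  map_smul' c g := by
    funext p; by_cases h : p.1 = i <;> simp [h]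

lemma embL_single (i : ι) (x : β i) :
    embL β i (Pi.single x 1) = Pi.single (⟨i, x⟩ : Σ j, β j) 1 := by
  funext ⟨j, b⟩
  rcases eq_or_ne j i with h | h
  · subst h
    simp only [embL, LinearMap.coe_mk, AddHom.coe_mk]
    rw [dif_pos trivial]
    rcases eq_or_ne b x with hb | hb
    · subst hb; simp
    · rw [Pi.single_apply, if_neg hb, Pi.single_apply, if_neg]
      simp [hb]
  · simp only [embL, LinearMap.coe_mk, AddHom.coe_mk]
    rw [dif_neg h, Pi.single_apply, if_neg]
    intro hc
    exact h (congrArg Sigma.fst hc)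

lemma sigmaLE_same_iff (le : ∀ i, β i → β i → Prop) (i : ι) (a b : β i) :
    sigmaLE le ⟨i, a⟩ ⟨i, b⟩ ↔ le i a b := by
  constructor
  · rintro ⟨h, hle⟩
    have : h = rfl := rfl
    rw [this] at hle
    exact hle
  · intro h; exact ⟨rfl, h⟩

lemma sigmaLE_fst {le : ∀ i, β i → β i → Prop} {p q : Σ j, β j}
    (h : sigmaLE le p q) : p.1 = q.1 := by
  obtain ⟨i, a⟩ := p; obtain ⟨j, b⟩ := q
  exact h.1

lemma relCovBy_sigma_iff (le : ∀ i, β i → β i → Prop) (i : ι) (a b : β i) :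
    RelCovBy (sigmaLE le) ⟨i, a⟩ ⟨i, b⟩ ↔ RelCovBy (le i) a b := by
  constructor
  · rintro ⟨h₁, h₂, h₃⟩
    refine ⟨(sigmaLE_same_iff le i a b).1 h₁, fun hab => h₂ (by rw [hab]), ?_⟩
    intro z hz₁ hz₂
    have := h₃ ⟨i, z⟩ ((sigmaLE_same_iff le i a z).2 hz₁)
      ((sigmaLE_same_iff le i z b).2 hz₂)
    rcases this with h | h
    · exact Or.inl (eq_of_heq (Sigma.mk.inj_iff.1 h).2)
    · exact Or.inr (eq_of_heq (Sigma.mk.inj_iff.1 h).2)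
  · rintro ⟨h₁, h₂, h₃⟩
    refine ⟨(sigmaLE_same_iff le i a b).2 h₁, ?_, ?_⟩
    · intro hc
      exact h₂ (eq_of_heq (Sigma.mk.inj_iff.1 hc).2)
    · rintro ⟨j, z⟩ hz₁ hz₂
      obtain rfl : i = j := sigmaLE_fst hz₁
      rcases h₃ z ((sigmaLE_same_iff le i a z).1 hz₁)
        ((sigmaLE_same_iff le i z b).1 hz₂) with h | h
      · exact Or.inl (by rw [h])
      · exact Or.inr (by rw [h])

lemma genSet_sigma (le : ∀ i, β i → β i → Prop) :
    genSet (sigmaLE le) = ⋃ i, embL β i '' genSet (le i) := by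
  ext f
  constructor
  · rintro ((⟨⟨i, x⟩, hmax, rfl⟩ | ⟨⟨i, x⟩, ⟨j, y⟩, hcov, rfl⟩) | ⟨⟨i, y⟩, hmin, rfl⟩)
    · refine Set.mem_iUnion.2 ⟨i, ⟨Pi.single x 1, ?_, embL_single i x⟩⟩
      refine Or.inl (Or.inl ⟨x, fun y hy => ?_, rfl⟩)
      have := hmax ⟨i, y⟩ ((sigmaLE_same_iff le i x y).2 hy)
      exact eq_of_heq (Sigma.mk.inj_iff.1 this).2
    · obtain rfl : i = j := sigmaLE_fst hcov.1
      refine Set.mem_iUnion.2 ⟨i, ⟨Pi.single x 1 - Pi.single y 1, ?_, ?_⟩⟩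
      · exact Or.inl (Or.inr ⟨x, y, (relCovBy_sigma_iff le i x y).1 hcov, rfl⟩)
      · rw [map_sub, embL_single, embL_single]
    · refine Set.mem_iUnion.2 ⟨i, ⟨-Pi.single y 1, ?_, ?_⟩⟩
      · refine Or.inr ⟨y, fun x hx => ?_, rfl⟩
        have := hmin ⟨i, x⟩ ((sigmaLE_same_iff le i x y).2 hx)
        exact eq_of_heq (Sigma.mk.inj_iff.1 this).2
      · rw [map_neg, embL_single]
  · intro hf
    obtain ⟨i, g, hg, rfl⟩ := Set.mem_iUnion.1 hf
    rcases hg with ((⟨x, hmax, rfl⟩ | ⟨x, y, hcov, rfl⟩) | ⟨y, hmin, rfl⟩)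
    · refine Or.inl (Or.inl ⟨⟨i, x⟩, ?_, embL_single i x⟩)
      rintro ⟨j, b⟩ hb
      obtain rfl : i = j := sigmaLE_fst hb
      rw [hmax b ((sigmaLE_same_iff le i x b).1 hb)]
    · refine Or.inl (Or.inr ⟨⟨i, x⟩, ⟨i, y⟩, (relCovBy_sigma_iff le i x y).2 hcov, ?_⟩)
      rw [map_sub, embL_single, embL_single]
    · refine Or.inr ⟨⟨i, y⟩, ?_, by rw [map_neg, embL_single]⟩
      rintro ⟨j, b⟩ hb
      obtain rfl : j = i := sigmaLE_fst hb
      rw [hmin b ((sigmaLE_same_iff le j b y).1 hb)]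

lemma convexHull_iUnion_convexHull {E : Type*} [AddCommGroup E] [Module ℚ E]
    {κ : Type*} (s : κ → Set E) :
    convexHull ℚ (⋃ i, convexHull ℚ (s i)) = convexHull ℚ (⋃ i, s i) := by
  apply Set.Subset.antisymm
  · exact convexHull_min
      (Set.iUnion_subset fun i => convexHull_mono (Set.subset_iUnion s i))
      (convex_convexHull ℚ _)
  · exact convexHull_mono (Set.iUnion_mono fun i => subset_convexHull ℚ (s i))

lemma embL_image_polytope [∀ i, PartialOrder (β i)] (i : ι) :
    embL β i '' posetPolytope (fun a b : β i => a ≤ b)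
      = {f : (Σ j, β j) → ℚ |
          (∀ j, ∀ b : β j, j ≠ i → f ⟨j, b⟩ = 0) ∧
          (fun b : β i => f ⟨i, b⟩) ∈ posetPolytope (fun a b : β i => a ≤ b)} := by
  ext f
  constructor
  · rintro ⟨g, hg, rfl⟩
    constructor
    · intro j b hj
      simp only [embL, LinearMap.coe_mk, AddHom.coe_mk]
      rw [dif_neg hj]
    · have : (fun b : β i => embL β i g ⟨i, b⟩) = g := by
        funext b
        simp only [embL, LinearMap.coe_mk, AddHom.coe_mk]
        rw [dif_pos trivial]
      rw [this]; exact hg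
  · rintro ⟨hz, hin⟩
    refine ⟨fun b => f ⟨i, b⟩, hin, ?_⟩
    funext ⟨j, b⟩
    simp only [embL, LinearMap.coe_mk, AddHom.coe_mk]
    rcases eq_or_ne j i with h | h
    · subst h; exact dif_pos rfl
    · rw [dif_neg h, hz j b h]

/-- Let `P` be a finite poset with connected components `P_1, …, P_r`
(so `P` is the disjoint union of the connected posets `P_i`).  Under the partition of the
coordinates according to the components, the poset polytope of `P` is the free sum of the
poset polytopes of the components: the convex hull of the union of the coordinate embeddings
of the `H_{P_i}`. -/
theorem stmt6 (r : ℕ) (β : Fin r → Type) [∀ i, Fintype (β i)] [∀ i, DecidableEq (β i)]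
    [∀ i, PartialOrder (β i)]
    (hconn : ∀ i, PosetConnected (fun a b : β i => a ≤ b)) :
    posetPolytope (sigmaLE (fun i (a b : β i) => a ≤ b))
      = convexHull ℚ
          (⋃ i, {f : (Σ j, β j) → ℚ |
            (∀ j, ∀ b : β j, j ≠ i → f ⟨j, b⟩ = 0) ∧
            (fun b : β i => f ⟨i, b⟩) ∈ posetPolytope (fun a b : β i => a ≤ b)}) := by
  calc posetPolytope (sigmaLE (fun i (a b : β i) => a ≤ b))
      = convexHull ℚ (genSet (sigmaLE (fun i (a b : β i) => a ≤ b))) := rfl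
    _ = convexHull ℚ (⋃ i, embL β i '' genSet (fun a b : β i => a ≤ b)) := by
        rw [genSet_sigma]
    _ = convexHull ℚ (⋃ i, convexHull ℚ (embL β i '' genSet (fun a b : β i => a ≤ b))) := by
        rw [convexHull_iUnion_convexHull]
    _ = convexHull ℚ (⋃ i, embL β i '' posetPolytope (fun a b : β i => a ≤ b)) := by
        congr 1
        exact Set.iUnion_congr fun i => by
          rw [posetPolytope_eq, (embL β i).image_convexHull]
    _ = _ := by
        congr 1
        exact Set.iUnion_congr fun i => embL_image_polytope i
end

section
/- Let q > 3 be a prime power and let m ≤ n be positive integers. Then the minimum distance of the toric code associated with the order polytope of the ordinal sum A_m ⊕ A_n satisfies d(C_{O_{A_m ⊕ A_n}}) ≤ (q−2)^m (q−1)^n. -/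
open Finset

/-- The order relation of the ordinal sum `A_m ⊕ A_n` of an `m`-element antichain below an
`n`-element antichain, on `Fin (m + n)`. -/
def amanLE (m n : ℕ) : Fin (m + n) → Fin (m + n) → Prop :=
  fun a b => a = b ∨ (a.val < m ∧ m ≤ b.val)

/-- Let `q > 3` be a prime power (realized as the cardinality of a finite
field `F`) and `m ≤ n` positive integers.  The minimum distance of the toric code of the
order polytope of `A_m ⊕ A_n` is at most `(q-2)^m * (q-1)^n`. -/
theorem stmt10 (q m n : ℕ) (hq : 3 < q) (hm : 0 < m) (hmn : m ≤ n)
    (F : Type) [Field F] [Fintype F] (hF : Fintype.card F = q) :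
    toricMinDist (Fin (m + n)) (amanLE m n) F ≤ (q - 2) ^ m * (q - 1) ^ n := by
  classical
  have hcard : Fintype.card Fˣ = q - 1 := by rw [Fintype.card_units, hF]
  set Bot : Finset (Fin (m+n)) := univ.filter (fun i => (i:ℕ) < m) with hBotdef
  set Top : Finset (Fin (m+n)) := univ.filter (fun i => m ≤ (i:ℕ)) with hTopdef
  have hBotcard : Bot.card = m := by
    have hBm : Bot = univ.map (Fin.castAddEmb n) := by
      ext i
      simp only [hBotdef, mem_filter, mem_univ, true_and, mem_map]
      constructor
      · intro h; exact ⟨⟨i.val, h⟩, Fin.ext rfl⟩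
      · rintro ⟨j, rfl⟩; exact j.isLt
    rw [hBm, card_map, card_univ, Fintype.card_fin]
  have hTopfilter : Top = univ.filter (fun i : Fin (m+n) => ¬ (i:ℕ) < m) := by
    ext i; simp [hTopdef, not_lt]
  have hTopcard : Top.card = n := by
    have h := Finset.card_filter_add_card_filter_not
      (s := (univ : Finset (Fin (m+n)))) (p := fun i : Fin (m+n) => (i:ℕ) < m)
    rw [← hBotdef, ← hTopfilter] at h
    rw [card_univ, Fintype.card_fin, hBotcard] at h
    omega
  set g : (Fin (m+n) → Fˣ) → F :=
    fun x => (∏ i ∈ Bot, ((x i : F) - 1)) * ∏ i ∈ Top, (x i : F) with hgdef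
  -- membership
  have hmem : g ∈ monomialSpan (Fin (m+n)) (amanLE m n) F := by
    have hrepr : g = ∑ t ∈ Bot.powerset,
        ((-1 : F) ^ (Bot \ t).card) •
          (fun x : Fin (m+n) → Fˣ => ∏ i ∈ t ∪ Top, (x i : F)) := by
      funext x
      rw [Finset.sum_apply]
      have expand : (∏ i ∈ Bot, ((x i : F) - 1)) =
          ∑ t ∈ Bot.powerset, (∏ i ∈ t, (x i : F)) * (-1 : F) ^ (Bot \ t).card := by
        have h := Finset.prod_add (fun i => (x i : F)) (fun _ => (-1 : F)) Bot
        simpa [sub_eq_add_neg, Finset.prod_const] using h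
      rw [hgdef]
      simp only
      rw [expand, Finset.sum_mul]
      refine Finset.sum_congr rfl ?_
      intro t ht
      have hdisj : Disjoint t Top := by
        rw [Finset.disjoint_left]
        intro a hat haT
        have hab : a ∈ Bot := Finset.mem_powerset.mp ht hat
        rw [hBotdef, mem_filter] at hab
        rw [hTopdef, mem_filter] at haT
        omega
      rw [Pi.smul_apply, smul_eq_mul, Finset.prod_union hdisj]
      ring
    rw [hrepr]
    refine Submodule.sum_mem _ ?_
    intro t ht
    refine Submodule.smul_mem _ _ (Submodule.subset_span ?_)
    refine ⟨t ∪ Top, ?_, rfl⟩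
    intro a ha b hab
    rcases hab with rfl | ⟨h1, h2⟩
    · exact ha
    · exact Finset.mem_union_right _ (by simp [hTopdef, h2])
  -- nonvanishing criterion
  have hnonzero : ∀ x : Fin (m+n) → Fˣ, g x ≠ 0 ↔ ∀ i : Fin (m+n), (i:ℕ) < m → x i ≠ 1 := by
    intro x
    rw [hgdef]
    simp only
    rw [mul_ne_zero_iff]
    have h2 : (∏ i ∈ Top, (x i : F)) ≠ 0 :=
      Finset.prod_ne_zero_iff.mpr (fun i _ => Units.ne_zero _)
    rw [and_iff_left h2, Finset.prod_ne_zero_iff]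
    constructor
    · intro h i hi hxi
      exact h i (by simp [hBotdef, hi]) (by rw [hxi]; simp)
    · intro h i hi
      rw [hBotdef, mem_filter] at hi
      have := h i hi.2
      rw [sub_ne_zero]
      exact fun hc => this (Units.ext (by simpa using hc))
  -- g is nonzero
  have hgne : g ≠ 0 := by
    have : Nontrivial Fˣ := by
      rw [← Fintype.one_lt_card_iff_nontrivial, hcard]; omega
    obtain ⟨u, hu⟩ := exists_ne (1 : Fˣ)
    intro h0
    have := (hnonzero (fun _ => u)).mpr (fun i _ => hu)
    exact this (by rw [h0]; rfl)
  -- counting nonvanishing points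
  set t : Fin (m+n) → Finset Fˣ := fun i => if (i:ℕ) < m then univ.erase 1 else univ
    with htdef
  have hfilter : (univ.filter fun x : Fin (m+n) → Fˣ => g x ≠ 0) = Fintype.piFinset t := by
    ext x
    simp only [mem_filter, mem_univ, true_and, Fintype.mem_piFinset]
    rw [hnonzero]
    constructor
    · intro h i
      rw [htdef]
      by_cases hi : (i:ℕ) < m
      · simp only [hi, if_true, mem_erase, mem_univ, and_true]
        exact h i hi
      · simp [hi]
    · intro h i hi
      have := h i
      rw [htdef] at this
      simp only [hi, if_true, mem_erase, mem_univ, and_true] at this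
      exact this
  have hcardnonzero : Fintype.card {x : Fin (m+n) → Fˣ // g x ≠ 0}
      = (q-2)^m * (q-1)^n := by
    rw [Fintype.card_subtype, hfilter, Fintype.card_piFinset]
    have hti : ∀ i : Fin (m+n), (t i).card = if (i:ℕ) < m then q - 2 else q - 1 := by
      intro i
      rw [htdef]
      by_cases hi : (i:ℕ) < m
      · simp only [hi, if_true]
        rw [Finset.card_erase_of_mem (mem_univ _), card_univ, hcard]
        omega
      · simp only [hi, if_false]
        rw [card_univ, hcard]
    simp_rw [hti]
    rw [Finset.prod_ite, Finset.prod_const, Finset.prod_const, ← hBotdef, ← hTopfilter,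
      hBotcard, hTopcard]
  -- the number of zeros of g
  have hzero : Nat.card {x : Fin (m+n) → Fˣ // g x = 0}
      = (q-1)^(m+n) - (q-2)^m * (q-1)^n := by
    rw [Nat.card_eq_fintype_card]
    have h1 : Fintype.card {x : Fin (m+n) → Fˣ // g x = 0}
        = Fintype.card (Fin (m+n) → Fˣ) - Fintype.card {x : Fin (m+n) → Fˣ // g x ≠ 0} := by
      rw [← Fintype.card_subtype_compl (fun x : Fin (m+n) → Fˣ => g x ≠ 0)]
      exact Fintype.card_congr (Equiv.subtypeEquivRight (fun x => by simp))
    rw [h1, hcardnonzero, Fintype.card_fun, hcard, Fintype.card_fin]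
  have hle : (q-2)^m * (q-1)^n ≤ (q-1)^(m+n) := by
    rw [pow_add]
    exact Nat.mul_le_mul_right _ (Nat.pow_le_pow_left (by omega) m)
  -- assemble
  have hbdd : BddAbove {k : ℕ | ∃ g ∈ monomialSpan (Fin (m+n)) (amanLE m n) F, g ≠ 0 ∧
      k = Nat.card {x : Fin (m+n) → Fˣ // g x = 0}} := by
    refine ⟨Fintype.card (Fin (m+n) → Fˣ), ?_⟩
    rintro k ⟨g, -, -, rfl⟩
    rw [Nat.card_eq_fintype_card]
    exact Fintype.card_subtype_le _
  have hsup : (q-1)^(m+n) - (q-2)^m * (q-1)^n ≤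
      sSup {k : ℕ | ∃ g ∈ monomialSpan (Fin (m+n)) (amanLE m n) F, g ≠ 0 ∧
        k = Nat.card {x : Fin (m+n) → Fˣ // g x = 0}} :=
    le_csSup hbdd ⟨g, hmem, hgne, hzero.symm⟩
  unfold toricMinDist
  rw [hF, Fintype.card_fin]
  calc (q - 1) ^ (m + n) - sSup _
      ≤ (q - 1) ^ (m + n) - ((q-1)^(m+n) - (q-2)^m * (q-1)^n) :=
        Nat.sub_le_sub_left hsup _
    _ = (q - 2) ^ m * (q - 1) ^ n := Nat.sub_sub_self hle
end

section
/- Let q > 3 be a prime power and let m be a positive integer. The minimum distance of the toric code associated with the order polytope of H_m, the disjoint union of m two-element chains, is d(C_{O_{H_m}}) = (q−1)^m (q−2)^m. -/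
open Finset

/-- The order relation of `H_m`, the disjoint union of `m` two-element chains, on
`Fin (2*m)`: the only strict relations are `ε_i < ε_{m+i}` for `i = 1, …, m`. -/
def hmLE (m : ℕ) : Fin (2 * m) → Fin (2 * m) → Prop :=
  fun a b => a = b ∨ (a.val < m ∧ b.val = a.val + m)

/-!
Write a point of `(𝔽_q^×)^{2m}` as pairs `(a_i, b_i) = (x_i, x_{m+i})`. An upper ideal of `H_m`
meets the `i`-th chain in `∅`, `{ε_{m+i}}` or the whole chain, so every monomial spanning
`L_{H_m}` is a product of factors `1`, `b_i`, `a_i b_i`: the code lies in the `m`-fold tensor power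
of `C = span {1, b, ab}`. A nonzero `α + (β + γ a) b` has Hamming weight at least
`(q - 1)(q - 2)` on `(𝔽_q^×)^2`: if `α ≠ 0` each fibre `a = const` has at most one zero, and if
`α = 0` it vanishes on at most one fibre. Slicing a tensor along one factor and then the other shows
that these weight bounds multiply, so every nonzero codeword has weight at least
`((q - 1)(q - 2))^m`, and `∏ (1 - b_i)` attains it.
-/

section HammingNorm

variable {ι κ M : Type*} [Fintype ι] [Fintype κ] [Zero M] [DecidableEq M]

theorem hammingNorm_comp_equiv (e : κ ≃ ι) (x : ι → M) :
    hammingNorm (x ∘ e) = hammingNorm x := by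
  unfold hammingNorm
  exact Finset.card_equiv e (by simp)

theorem hammingNorm_uncurry (f : ι × κ → M) :
    hammingNorm f = ∑ i, hammingNorm fun k => f (i, k) := by
  simp only [hammingNorm, Finset.card_filter, Fintype.sum_prod_type]

theorem hammingNorm_eq_card_of_forall_ne_zero {x : ι → M} (hx : ∀ i, x i ≠ 0) :
    hammingNorm x = Fintype.card ι := by
  simp [hammingNorm, hx]

theorem card_filter_eq_zero_add_hammingNorm (x : ι → M) :
    #{i | x i = 0} + hammingNorm x = Fintype.card ι :=
  card_filter_add_card_filter_not _

theorem card_sub_one_le_hammingNorm {x : ι → M} (hx : ∀ i j, x i = 0 → x j = 0 → i = j) :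
    Fintype.card ι - 1 ≤ hammingNorm x := by
  have hzeros : #{i | x i = 0} ≤ 1 := Finset.card_le_one.mpr fun i hi j hj => by
    simp only [mem_filter, mem_univ, true_and] at hi hj
    exact hx i j hi hj
  have := card_filter_eq_zero_add_hammingNorm x
  omega

theorem mul_le_hammingNorm_of_slices {a b : ℕ} {f : ι × κ → M} (hf : f ≠ 0)
    (hrow : ∀ k, (fun i => f (i, k)) ≠ 0 → a ≤ hammingNorm fun i => f (i, k))
    (hcol : ∀ i, (fun k => f (i, k)) ≠ 0 → b ≤ hammingNorm fun k => f (i, k)) :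
    a * b ≤ hammingNorm f := by
  obtain ⟨⟨i₀, k₀⟩, hik⟩ := Function.ne_iff.mp hf
  set S : Finset ι := {i | (fun k => f (i, k)) ≠ 0}
  have hS : a ≤ #S := by
    refine (hrow k₀ (Function.ne_iff.mpr ⟨i₀, hik⟩)).trans (Finset.card_le_card fun i hi => ?_)
    simp only [mem_filter, mem_univ, true_and, S] at hi ⊢
    exact Function.ne_iff.mpr ⟨k₀, hi⟩
  calc a * b ≤ #S * b := Nat.mul_le_mul_right b hS
    _ = ∑ i ∈ S, b := by rw [sum_const, smul_eq_mul]
    _ ≤ ∑ i ∈ S, hammingNorm fun k => f (i, k) :=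
        sum_le_sum fun i hi => hcol i (mem_filter.mp hi).2
    _ ≤ ∑ i, hammingNorm fun k => f (i, k) := sum_le_sum_of_subset (subset_univ S)
    _ = hammingNorm f := (hammingNorm_uncurry f).symm

theorem hammingNorm_pi_prod {R : Type*} [CommMonoidWithZero R] [NoZeroDivisors R] [Nontrivial R]
    [DecidableEq R] [DecidableEq ι] {α : ι → Type*} [∀ i, Fintype (α i)] (g : ∀ i, α i → R) :
    hammingNorm (fun y : ∀ i, α i => ∏ i, g i (y i)) = ∏ i, hammingNorm (g i) := by
  have : ({y | ∏ i, g i (y i) ≠ 0} : Finset (∀ i, α i)) =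
      Fintype.piFinset fun i => {a | g i a ≠ 0} := by
    ext y; simp [Finset.prod_ne_zero_iff]
  simp only [hammingNorm, this, Fintype.card_piFinset]

end HammingNorm

section ChainSpan

variable {F : Type*} [Field F]

variable (F) in
def chainSpan : Submodule F (Fˣ × Fˣ → F) :=
  Submodule.span F (Set.range ![1, fun p => (p.2 : F), fun p => (p.1 : F) * p.2])

theorem mem_chainSpan_iff {g : Fˣ × Fˣ → F} :
    g ∈ chainSpan F ↔ ∃ α β γ : F, ∀ a b : Fˣ, g (a, b) = α + (β + γ * a) * b := by
  rw [chainSpan, Submodule.mem_span_range_iff_exists_fun]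
  constructor
  · rintro ⟨c, rfl⟩
    exact ⟨c 0, c 1, c 2, fun a b => by simp [Fin.sum_univ_three]; ring⟩
  · rintro ⟨α, β, γ, hg⟩
    exact ⟨![α, β, γ], funext fun ⟨a, b⟩ => by simp [Fin.sum_univ_three, hg]; ring⟩

variable [Fintype F] [DecidableEq F]

theorem card_units_sub_one_le_hammingNorm_affine {u w : F} (h : u ≠ 0 ∨ w ≠ 0) :
    Fintype.card Fˣ - 1 ≤ hammingNorm fun b : Fˣ => u + w * b := by
  refine card_sub_one_le_hammingNorm fun b b' hb hb' => ?_
  have hw : w ≠ 0 := by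
    rintro rfl
    simp_all
  exact Units.ext <| mul_left_cancel₀ hw <| add_left_cancel (hb.trans hb'.symm)

theorem card_mul_le_hammingNorm_of_mem_chainSpan {g : Fˣ × Fˣ → F} (hg : g ∈ chainSpan F)
    (hg0 : g ≠ 0) : Fintype.card Fˣ * (Fintype.card Fˣ - 1) ≤ hammingNorm g := by
  obtain ⟨α, β, γ, hg_eq⟩ := mem_chainSpan_iff.mp hg
  rcases eq_or_ne α 0 with rfl | hα
  · have hβγ : β ≠ 0 ∨ γ ≠ 0 := by
      by_contra! h
      exact hg0 <| funext fun ⟨a, b⟩ => by simp [hg_eq, h.1, h.2]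
    rw [mul_comm]
    refine mul_le_hammingNorm_of_slices hg0 (fun b _ => ?_) (fun a ha => ?_)
    · have hslice : (fun a : Fˣ => g (a, b)) = fun a : Fˣ => β * b + γ * b * a := by
        funext a; rw [hg_eq]; ring
      rw [hslice]
      refine card_units_sub_one_le_hammingNorm_affine ?_
      simpa only [ne_eq, mul_eq_zero, Units.ne_zero, or_false] using hβγ
    · have hβγa : β + γ * a ≠ 0 := fun h => ha <| funext fun b => by simp [hg_eq, h]
      rw [hammingNorm_eq_card_of_forall_ne_zero fun b => by simp [hg_eq, hβγa]]
  · rw [hammingNorm_uncurry]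
    calc Fintype.card Fˣ * (Fintype.card Fˣ - 1) = ∑ _a : Fˣ, (Fintype.card Fˣ - 1) := by
          rw [sum_const, smul_eq_mul, card_univ]
      _ ≤ _ := sum_le_sum fun a _ => by
          simp_rw [hg_eq]
          exact card_units_sub_one_le_hammingNorm_affine (Or.inl hα)

end ChainSpan

section ChainTensorSpan

variable {F : Type*} [Field F]

variable (F) in
def chainTensorSpan (n : ℕ) : Submodule F ((Fin n → Fˣ × Fˣ) → F) :=
  Submodule.span F {f | ∃ g : Fin n → Fˣ × Fˣ → F, (∀ i, g i ∈ chainSpan F) ∧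
    f = fun y => ∏ i, g i (y i)}

theorem slice_cons_mem_chainTensorSpan {n : ℕ} {f : (Fin (n + 1) → Fˣ × Fˣ) → F}
    (hf : f ∈ chainTensorSpan F (n + 1)) (p : Fˣ × Fˣ) :
    (fun y => f (Fin.cons p y)) ∈ chainTensorSpan F n := by
  induction hf using Submodule.span_induction with
  | mem f hf =>
    obtain ⟨g, hg, rfl⟩ := hf
    have hslice : (fun y => ∏ i, g i (Fin.cons (α := fun _ => Fˣ × Fˣ) p y i)) =
        g 0 p • fun y => ∏ i : Fin n, g i.succ (y i) := by
      funext y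
      simp [Fin.prod_univ_succ]
    rw [hslice]
    exact Submodule.smul_mem _ _ (Submodule.subset_span ⟨_, fun i => hg i.succ, rfl⟩)
  | zero => exact Submodule.zero_mem _
  | add f g _ _ hf hg => exact Submodule.add_mem _ hf hg
  | smul c f _ hf => exact Submodule.smul_mem _ c hf

theorem slice_cons_mem_chainSpan {n : ℕ} {f : (Fin (n + 1) → Fˣ × Fˣ) → F}
    (hf : f ∈ chainTensorSpan F (n + 1)) (y : Fin n → Fˣ × Fˣ) :
    (fun p => f (Fin.cons p y)) ∈ chainSpan F := by
  induction hf using Submodule.span_induction with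
  | mem f hf =>
    obtain ⟨g, hg, rfl⟩ := hf
    have hslice : (fun p => ∏ i, g i (Fin.cons (α := fun _ => Fˣ × Fˣ) p y i)) =
        (∏ i : Fin n, g i.succ (y i)) • g 0 := by
      funext p
      simp [Fin.prod_univ_succ, mul_comm]
    rw [hslice]
    exact Submodule.smul_mem _ _ (hg 0)
  | zero => exact Submodule.zero_mem _
  | add f g _ _ hf hg => exact Submodule.add_mem _ hf hg
  | smul c f _ hf => exact Submodule.smul_mem _ c hf

variable [Fintype F] [DecidableEq F]

theorem pow_le_hammingNorm_of_mem_chainTensorSpan {n : ℕ} {f : (Fin n → Fˣ × Fˣ) → F}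
    (hf : f ∈ chainTensorSpan F n) (hf0 : f ≠ 0) :
    (Fintype.card Fˣ * (Fintype.card Fˣ - 1)) ^ n ≤ hammingNorm f := by
  induction n with
  | zero => exact hammingNorm_pos_iff.mpr hf0
  | succ n ih =>
    set e := Fin.consEquiv fun _ : Fin (n + 1) => Fˣ × Fˣ
    have hfe : f ∘ e ≠ 0 := fun h => hf0 <| funext fun x => by
      simpa using congrFun h (e.symm x)
    rw [← hammingNorm_comp_equiv e, pow_succ']
    exact mul_le_hammingNorm_of_slices hfe
      (fun y hy => card_mul_le_hammingNorm_of_mem_chainSpan (slice_cons_mem_chainSpan hf y) hy)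
      (fun p hp => ih (slice_cons_mem_chainTensorSpan hf p) hp)

end ChainTensorSpan

section DisjointChains

-- `finProdFinEquiv (k, i) = i + m * k`, so `(0, i)` and `(1, i)` are `ε_i` and `ε_{m+i}`.
def pairEquiv (m : ℕ) (β : Type*) : (Fin (2 * m) → β) ≃ (Fin m → β × β) :=
  (finProdFinEquiv.arrowCongr (Equiv.refl β)).symm.trans <|
    (Equiv.curry _ _ _).trans <| (piFinTwoEquiv fun _ => Fin m → β).trans
      (Equiv.arrowProdEquivProdArrow _ _ _).symm

variable {m : ℕ}

@[simp]
theorem pairEquiv_symm_apply_zero {β : Type*} (y : Fin m → β × β) (i : Fin m) :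
    (pairEquiv m β).symm y (finProdFinEquiv (0, i)) = (y i).1 := by
  simp [pairEquiv]

@[simp]
theorem pairEquiv_symm_apply_one {β : Type*} (y : Fin m → β × β) (i : Fin m) :
    (pairEquiv m β).symm y (finProdFinEquiv (1, i)) = (y i).2 := by
  simp [pairEquiv]

theorem hmLE_finProdFinEquiv (i : Fin m) :
    hmLE m (finProdFinEquiv (0, i)) (finProdFinEquiv (1, i)) :=
  Or.inr ⟨by simp, by simp [add_comm]⟩

theorem eq_of_hmLE_finProdFinEquiv_one {i : Fin m} {j : Fin (2 * m)}
    (h : hmLE m (finProdFinEquiv (1, i)) j) : j = finProdFinEquiv (1, i) := by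
  rcases h with h | ⟨h, -⟩
  · exact h.symm
  · simp at h

theorem prod_eq_prod_finProdFinEquiv {β : Type*} [CommMonoid β] (W : Finset (Fin (2 * m)))
    (x : Fin (2 * m) → β) :
    ∏ j ∈ W, x j = ∏ i, (if finProdFinEquiv (0, i) ∈ W then x (finProdFinEquiv (0, i)) else 1) *
      (if finProdFinEquiv (1, i) ∈ W then x (finProdFinEquiv (1, i)) else 1) := by
  classical
  rw [← prod_ite_mem_eq, ← finProdFinEquiv.prod_comp, Fintype.prod_prod_type_right]
  simp only [Fin.prod_univ_two]

variable {F : Type*} [Field F]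

theorem monomialSpan_hmLE_le_comap :
    monomialSpan (Fin (2 * m)) (hmLE m) F ≤
      (chainTensorSpan F m).comap (LinearMap.funLeft F F (pairEquiv m Fˣ).symm) := by
  rw [monomialSpan, Submodule.span_le]
  rintro _ ⟨W, hW, rfl⟩
  refine Submodule.subset_span ⟨fun i p =>
    (if finProdFinEquiv (0, i) ∈ W then (p.1 : F) else 1) *
      (if finProdFinEquiv (1, i) ∈ W then (p.2 : F) else 1), fun i => ?_, ?_⟩
  · refine mem_chainSpan_iff.mpr ?_
    by_cases h0 : finProdFinEquiv (0, i) ∈ W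
    · have h1 := hW _ h0 _ (hmLE_finProdFinEquiv i)
      exact ⟨0, 0, 1, by simp [h0, h1]⟩
    · by_cases h1 : finProdFinEquiv (1, i) ∈ W
      · exact ⟨0, 1, 0, by simp [h0, h1]⟩
      · exact ⟨1, 0, 0, by simp [h0, h1]⟩
  · funext y
    simp [LinearMap.funLeft, prod_eq_prod_finProdFinEquiv W]

theorem prod_one_sub_mem_monomialSpan_hmLE :
    (fun x : Fin (2 * m) → Fˣ => ∏ i, (1 - (x (finProdFinEquiv (1, i)) : F))) ∈
      monomialSpan (Fin (2 * m)) (hmLE m) F := by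
  classical
  set top : Fin m ↪ Fin (2 * m) := (Function.Embedding.sectR 1 _).trans finProdFinEquiv.toEmbedding
  have hexpand : (fun x : Fin (2 * m) → Fˣ => ∏ i, (1 - (x (finProdFinEquiv (1, i)) : F))) =
      ∑ B ∈ univ.powerset, (-1 : F) ^ #B • fun x => ∏ j ∈ B.map top, (x j : F) := by
    funext x
    simp [prod_sub, prod_map, top]
  rw [hexpand]
  refine Submodule.sum_mem _ fun B _ => Submodule.smul_mem _ _ (Submodule.subset_span ⟨_, ?_, rfl⟩)
  intro j hj k hjk
  obtain ⟨i, -, rfl⟩ := mem_map.mp hj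
  rwa [eq_of_hmLE_finProdFinEquiv_one hjk]

variable [Fintype F] [DecidableEq F]

theorem hammingNorm_one_sub_snd :
    hammingNorm (fun p : Fˣ × Fˣ => 1 - (p.2 : F)) =
      Fintype.card Fˣ * (Fintype.card Fˣ - 1) := by
  have hrow : hammingNorm (fun b : Fˣ => 1 - (b : F)) = Fintype.card Fˣ - 1 := by
    simp only [hammingNorm, ne_eq, sub_eq_zero, eq_comm (a := (1 : F)), Units.val_eq_one,
      filter_ne', card_erase_of_mem (mem_univ _), card_univ]
  simp [hammingNorm_uncurry, hrow]

theorem hammingNorm_prod_one_sub_hmLE :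
    hammingNorm (fun x : Fin (2 * m) → Fˣ => ∏ i, (1 - (x (finProdFinEquiv (1, i)) : F))) =
      (Fintype.card Fˣ * (Fintype.card Fˣ - 1)) ^ m := by
  rw [← hammingNorm_comp_equiv (pairEquiv m Fˣ).symm]
  have hcomp : (fun x : Fin (2 * m) → Fˣ => ∏ i, (1 - (x (finProdFinEquiv (1, i)) : F))) ∘
      (pairEquiv m Fˣ).symm = fun y => ∏ i, (1 - ((y i).2 : F)) := by
    funext y
    simp
  rw [hcomp, hammingNorm_pi_prod fun (_ : Fin m) (p : Fˣ × Fˣ) => 1 - (p.2 : F),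
    hammingNorm_one_sub_snd, prod_const, card_univ, Fintype.card_fin]

theorem pow_le_hammingNorm_of_mem_monomialSpan_hmLE {g : (Fin (2 * m) → Fˣ) → F}
    (hg : g ∈ monomialSpan (Fin (2 * m)) (hmLE m) F) (hg0 : g ≠ 0) :
    (Fintype.card Fˣ * (Fintype.card Fˣ - 1)) ^ m ≤ hammingNorm g := by
  rw [← hammingNorm_comp_equiv (pairEquiv m Fˣ).symm]
  refine pow_le_hammingNorm_of_mem_chainTensorSpan (monomialSpan_hmLE_le_comap hg) ?_
  rw [← hammingNorm_ne_zero_iff, hammingNorm_comp_equiv]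
  exact hammingNorm_ne_zero_iff.mpr hg0

end DisjointChains

theorem toricMinDist_eq_of_isLeast {α : Type*} [Fintype α] [DecidableEq α] {le : α → α → Prop}
    {F : Type*} [Field F] [Fintype F] [DecidableEq F] {w : ℕ}
    (hw : IsLeast {n | ∃ g ∈ monomialSpan α le F, g ≠ 0 ∧ n = hammingNorm g} w) :
    toricMinDist α le F = w := by
  set T := (Fintype.card F - 1) ^ Fintype.card α
  have hcard : Fintype.card (α → Fˣ) = T := by rw [Fintype.card_fun, Fintype.card_units]
  have hzeros (g : (α → Fˣ) → F) : Nat.card {x // g x = 0} = T - hammingNorm g := by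
    have := card_filter_eq_zero_add_hammingNorm g
    rw [Nat.card_eq_fintype_card, Fintype.card_subtype]
    omega
  obtain ⟨⟨g₀, hg₀, hg₀0, rfl⟩, hmin⟩ := hw
  have hmax : IsGreatest {n | ∃ g ∈ monomialSpan α le F, g ≠ 0 ∧
      n = Nat.card {x // g x = 0}} (T - hammingNorm g₀) := by
    refine ⟨⟨g₀, hg₀, hg₀0, (hzeros g₀).symm⟩, ?_⟩
    rintro _ ⟨g, hg, hg0, rfl⟩
    rw [hzeros]
    exact Nat.sub_le_sub_left (hmin ⟨g, hg, hg0, rfl⟩) T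
  have hle : hammingNorm g₀ ≤ T := hcard ▸ hammingNorm_le_card_fintype
  rw [toricMinDist, hmax.csSup_eq]
  omega

theorem toricMinDist_hmLE (m : ℕ) {F : Type*} [Field F] [Fintype F] (hF : 2 < Fintype.card F) :
    toricMinDist (Fin (2 * m)) (hmLE m) F =
      ((Fintype.card F - 1) * (Fintype.card F - 2)) ^ m := by
  classical
  rw [show Fintype.card F - 2 = Fintype.card F - 1 - 1 by omega, ← Fintype.card_units]
  have hg₀0 : (fun x : Fin (2 * m) → Fˣ => ∏ i, (1 - (x (finProdFinEquiv (1, i)) : F))) ≠ 0 := by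
    rw [← hammingNorm_ne_zero_iff, hammingNorm_prod_one_sub_hmLE, Fintype.card_units]
    exact pow_ne_zero m (Nat.mul_ne_zero (by omega) (by omega))
  refine toricMinDist_eq_of_isLeast ⟨⟨_, prod_one_sub_mem_monomialSpan_hmLE, hg₀0,
    hammingNorm_prod_one_sub_hmLE.symm⟩, ?_⟩
  rintro _ ⟨g, hg, hg0, rfl⟩
  exact pow_le_hammingNorm_of_mem_monomialSpan_hmLE hg hg0

theorem stmt11_general (q m : ℕ) (hq : 3 < q)
    (F : Type) [Field F] [Fintype F] (hF : Fintype.card F = q) :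
    toricMinDist (Fin (2 * m)) (hmLE m) F = (q - 1) ^ m * (q - 2) ^ m := by
  rw [toricMinDist_hmLE m (by omega), hF, mul_pow]

/-- Let `q > 3` be a prime power (realized as the cardinality of a finite
field `F`) and let `m` be a positive integer.  The minimum distance of the toric code of the
order polytope of `H_m` is `(q-1)^m * (q-2)^m`. -/
theorem stmt11 (q m : ℕ) (hq : 3 < q) (hm : 0 < m)
    (F : Type) [Field F] [Fintype F] (hF : Fintype.card F = q) :
    toricMinDist (Fin (2 * m)) (hmLE m) F = (q - 1) ^ m * (q - 2) ^ m :=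
  stmt11_general q m hq F hF
end

section
/- Let P be a rooted tree poset with m ≥ 2 vertices. Then the number of upper order ideals of P satisfies m + 1 ≤ #(upper order ideals of P) ≤ 2^{m−1} + 1. Moreover, the lower bound is attained exactly when P is isomorphic to the chain with m elements, and the upper bound is attained exactly when P is isomorphic to the m-th shrub S_m. -/
/-- The order relation of the `m`-th shrub `S_m` on `Fin m`: the element `ε_1` (index `0`)
is below every other element, and the elements `ε_2, …, ε_m` are pairwise incomparable. -/
def shrubLE (m : ℕ) : Fin m → Fin m → Prop :=
  fun a b => a = b ∨ a.val = 0

open Function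

lemma Function.Injective.nat_card_eq_iff_surjective {α β : Type*} [Finite β] {f : α → β}
    (hf : Injective f) : Nat.card α = Nat.card β ↔ Surjective f :=
  ⟨fun h => (hf.bijective_of_nat_card_le h.ge).2,
    fun h => Nat.card_eq_of_bijective f ⟨hf, h⟩⟩

lemma Nat.card_set (X : Type*) [Finite X] : Nat.card (Set X) = 2 ^ Nat.card X := by
  classical
  have := Fintype.ofFinite X
  simp only [Nat.card_eq_fintype_card, Fintype.card_set]

lemma Nat.card_subtype_ne_add_one {α : Type*} [Finite α] (a : α) :
    Nat.card {b // b ≠ a} + 1 = Nat.card α := by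
  classical
  rw [← Finite.card_option, Nat.card_congr (Equiv.optionSubtypeNe a)]

lemma isUpperIdeal_le_iff {α : Type*} [LE α] {W : Set α} :
    IsUpperIdeal (· ≤ ·) W ↔ IsUpperSet W :=
  ⟨fun h _ _ hab ha => h ha hab, fun h _ hx _ hxy => h hxy hx⟩

def upperIdealEquivUpperSet (α : Type*) [LE α] :
    {W : Set α // IsUpperIdeal (· ≤ ·) W} ≃ UpperSet α where
  toFun W := ⟨W.1, isUpperIdeal_le_iff.1 W.2⟩
  invFun s := ⟨s, isUpperIdeal_le_iff.2 s.upper⟩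
  left_inv _ := rfl
  right_inv _ := rfl

namespace UpperSet

lemma card_eq_card_ne_bot_add_one {α : Type*} [LE α] [Finite α] :
    Nat.card (UpperSet α) = Nat.card {s : UpperSet α // s ≠ ⊥} + 1 := by
  classical
  rw [← Finite.card_option, Nat.card_congr (Equiv.optionSubtypeNe ⊥)]

section Principal

variable {α : Type*} [PartialOrder α]

-- `UpperSet` is ordered by reverse inclusion: `⊤` is `∅` and `⊥` is the whole type.
def iciOrTop : Option α → UpperSet α := fun o => o.elim ⊤ Ici

lemma iciOrTop_injective : Injective (iciOrTop (α := α)) := by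
  rintro (_ | a) (_ | b) h
  · rfl
  · exact absurd h.symm Ici_ne_top
  · exact absurd h Ici_ne_top
  · exact congrArg some (Ici_injective h)

lemma iciOrTop_surjective_iff [Finite α] :
    Surjective (iciOrTop (α := α)) ↔ ∀ a b : α, a ≤ b ∨ b ≤ a := by
  constructor
  · intro hsurj a b
    obtain ⟨_ | c, hc⟩ := hsurj (Ici a ⊓ Ici b)
    · have ha : a ∈ Ici a ⊓ Ici b := by simp
      rw [← hc] at ha
      exact absurd ha (by simp [iciOrTop])
    · have hc' : Ici c = Ici a ⊓ Ici b := hc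
      have hmem : ∀ x, x ∈ Ici c ↔ a ≤ x ∨ b ≤ x := by
        intro x; rw [hc']; simp
      have hca : c ≤ a := (hmem a).2 (.inl le_rfl)
      have hcb : c ≤ b := (hmem b).2 (.inr le_rfl)
      rcases (hmem c).1 le_rfl with hac | hbc
      · exact .inl (hac.trans hcb)
      · exact .inr (hbc.trans hca)
  · intro htotal s
    rcases (s : Set α).eq_empty_or_nonempty with hs | hs
    · exact ⟨none, SetLike.coe_injective (by simp [iciOrTop, hs])⟩
    obtain ⟨a, ha⟩ := (s : Set α).toFinite.exists_minimal hs
    refine ⟨some a, SetLike.ext fun x => ⟨fun hax => s.upper hax ha.prop, fun hx => ?_⟩⟩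
    rcases htotal a x with hax | hxa
    · exact hax
    · exact ha.le_of_le hx hxa

theorem card_add_one_le_card [Finite α] : Nat.card α + 1 ≤ Nat.card (UpperSet α) := by
  rw [← Finite.card_option]
  exact Nat.card_le_card_of_injective _ iciOrTop_injective

theorem card_eq_card_add_one_iff [Finite α] :
    Nat.card (UpperSet α) = Nat.card α + 1 ↔ ∀ a b : α, a ≤ b ∨ b ≤ a := by
  rw [← Finite.card_option, eq_comm, iciOrTop_injective.nat_card_eq_iff_surjective,
    iciOrTop_surjective_iff]

end Principal

section Rooted

variable {α : Type*} [PartialOrder α] [OrderBot α]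

lemma bot_mem_iff {s : UpperSet α} : (⊥ : α) ∈ s ↔ s = ⊥ :=
  ⟨fun h => SetLike.coe_injective (Set.eq_univ_of_forall fun _ => s.upper bot_le h),
    fun h => h ▸ Set.mem_univ _⟩

def traceNeBot (s : {s : UpperSet α // s ≠ ⊥}) : Set {a : α // a ≠ ⊥} :=
  Subtype.val ⁻¹' (s.1 : Set α)

lemma traceNeBot_injective : Injective (traceNeBot (α := α)) := by
  intro s t h
  refine Subtype.ext (SetLike.ext fun x => ?_)
  by_cases hx : x = ⊥
  · subst hx
    simp only [bot_mem_iff, s.2, t.2]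
  · exact Set.ext_iff.1 h ⟨x, hx⟩

lemma traceNeBot_surjective_iff :
    Surjective (traceNeBot (α := α)) ↔ ∀ a : α, a ≠ ⊥ → IsMax a := by
  constructor
  · intro hsurj a ha b hab
    obtain ⟨s, hs⟩ := hsurj {⟨a, ha⟩}
    have has : a ∈ s.1 := Set.ext_iff.1 hs ⟨a, ha⟩ |>.2 rfl
    have hb : b ≠ ⊥ := fun hb => ha (le_bot_iff.1 (hb ▸ hab))
    have hba : (⟨b, hb⟩ : {a : α // a ≠ ⊥}) = ⟨a, ha⟩ :=
      (Set.ext_iff.1 hs ⟨b, hb⟩).1 (s.1.upper hab has)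
    exact (congrArg Subtype.val hba).le
  · intro hmax S
    have hupper : IsUpperSet (Subtype.val '' S) := by
      rintro _ y hxy ⟨⟨x, hx⟩, hxS, rfl⟩
      obtain rfl := (hmax x hx).eq_of_le hxy
      exact ⟨⟨x, hx⟩, hxS, rfl⟩
    have hne : (⟨_, hupper⟩ : UpperSet α) ≠ ⊥ := fun h => by
      obtain ⟨⟨x, hx⟩, -, hx'⟩ := bot_mem_iff.2 h
      exact hx hx'
    exact ⟨⟨_, hne⟩, Set.preimage_image_eq S Subtype.val_injective⟩

variable [Finite α]

lemma card_set_ne_bot : Nat.card (Set {a : α // a ≠ ⊥}) = 2 ^ (Nat.card α - 1) := by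
  rw [Nat.card_set, ← Nat.card_subtype_ne_add_one (⊥ : α), Nat.add_sub_cancel]

theorem card_le_two_pow_add_one : Nat.card (UpperSet α) ≤ 2 ^ (Nat.card α - 1) + 1 := by
  rw [card_eq_card_ne_bot_add_one, ← card_set_ne_bot]
  exact Nat.add_le_add_right (Nat.card_le_card_of_injective _ traceNeBot_injective) 1

theorem card_eq_two_pow_add_one_iff :
    Nat.card (UpperSet α) = 2 ^ (Nat.card α - 1) + 1 ↔ ∀ a : α, a ≠ ⊥ → IsMax a := by
  rw [card_eq_card_ne_bot_add_one, ← card_set_ne_bot, Nat.add_right_cancel_iff,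
    traceNeBot_injective.nat_card_eq_iff_surjective, traceNeBot_surjective_iff]

end Rooted

end UpperSet

lemma nonempty_orderIso_fin_iff {α : Type*} [PartialOrder α] [Finite α] {m : ℕ}
    (hcard : Nat.card α = m) : Nonempty (α ≃o Fin m) ↔ ∀ a b : α, a ≤ b ∨ b ≤ a := by
  constructor
  · rintro ⟨e⟩ a b
    exact (le_total (e a) (e b)).imp e.le_iff_le.1 e.le_iff_le.1
  · intro htotal
    classical
    let : LinearOrder α :=
      { ‹PartialOrder α› with le_total := htotal, toDecidableLE := inferInstance }
    have := Fintype.ofFinite α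
    exact ⟨(Fintype.orderIsoFinOfCardEq α (Nat.card_eq_fintype_card.symm.trans hcard)).symm⟩

lemma exists_equiv_shrubLE_iff {α : Type*} [PartialOrder α] [OrderBot α] [Finite α] {m : ℕ}
    (hcard : Nat.card α = m) :
    (∃ e : α ≃ Fin m, ∀ a b : α, a ≤ b ↔ shrubLE m (e a) (e b)) ↔
      ∀ a : α, a ≠ ⊥ → IsMax a := by
  constructor
  · rintro ⟨e, he⟩ a ha b hab
    rcases (he a b).1 hab with h | h
    · exact (e.injective h).ge
    · rcases (he ⊥ a).1 bot_le with h' | h'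
      · exact absurd (e.injective h').symm ha
      · exact absurd (e.injective (Fin.ext (h.trans h'.symm))) ha
  · intro hmax
    let e₀ := Finite.equivFinOfCardEq hcard
    let e := e₀.trans (Equiv.swap (e₀ ⊥) ⟨0, (e₀ ⊥).pos⟩)
    have he_bot : (e ⊥).val = 0 := by simp [e]
    refine ⟨e, fun a b => ?_⟩
    have hzero : (e a).val = 0 ↔ a = ⊥ := by
      rw [← he_bot, ← Fin.ext_iff, e.apply_eq_iff_eq]
    rw [shrubLE, hzero, e.apply_eq_iff_eq]
    constructor
    · intro hab
      by_cases ha : a = ⊥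
      · exact .inr ha
      · exact .inl (le_antisymm hab (hmax a ha hab))
    · rintro (rfl | rfl)
      exacts [le_rfl, bot_le]

theorem stmt16_general (m : ℕ)
    (α : Type) [Fintype α] [PartialOrder α] (hcard : Fintype.card α = m)
    (root : α) (hroot : ∀ x : α, root ≤ x) :
    (m + 1 ≤ Nat.card {W : Set α // IsUpperIdeal (fun a b : α => a ≤ b) W} ∧
      Nat.card {W : Set α // IsUpperIdeal (fun a b : α => a ≤ b) W} ≤ 2 ^ (m - 1) + 1) ∧
    (Nat.card {W : Set α // IsUpperIdeal (fun a b : α => a ≤ b) W} = m + 1 ↔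
      Nonempty (α ≃o Fin m)) ∧
    (Nat.card {W : Set α // IsUpperIdeal (fun a b : α => a ≤ b) W} = 2 ^ (m - 1) + 1 ↔
      ∃ e : α ≃ Fin m, ∀ a b : α, a ≤ b ↔ shrubLE m (e a) (e b)) := by
  let : OrderBot α := { bot := root, bot_le := hroot }
  have hα : Nat.card α = m := Nat.card_eq_fintype_card.trans hcard
  rw [Nat.card_congr (upperIdealEquivUpperSet α), nonempty_orderIso_fin_iff hα,
    exists_equiv_shrubLE_iff hα, ← hα]
  exact ⟨⟨UpperSet.card_add_one_le_card, UpperSet.card_le_two_pow_add_one⟩,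
    UpperSet.card_eq_card_add_one_iff, UpperSet.card_eq_two_pow_add_one_iff⟩

/-- Let `P` be a rooted tree poset with `m ≥ 2` vertices (a finite poset
with a least element `root` such that every other element covers a unique element).  Then the
number of upper order ideals of `P` lies between `m + 1` and `2^(m-1) + 1`; the lower bound
is attained exactly when `P` is isomorphic to the chain with `m` elements, and the upper
bound is attained exactly when `P` is isomorphic to the `m`-th shrub `S_m`. -/
theorem stmt16 (m : ℕ) (hm : 2 ≤ m)
    (α : Type) [Fintype α] [PartialOrder α] (hcard : Fintype.card α = m)
    (root : α) (hroot : ∀ x : α, root ≤ x)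
    (htree : ∀ y : α, y ≠ root → ∃! x : α, x ⋖ y) :
    (m + 1 ≤ Nat.card {W : Set α // IsUpperIdeal (fun a b : α => a ≤ b) W} ∧
      Nat.card {W : Set α // IsUpperIdeal (fun a b : α => a ≤ b) W} ≤ 2 ^ (m - 1) + 1) ∧
    (Nat.card {W : Set α // IsUpperIdeal (fun a b : α => a ≤ b) W} = m + 1 ↔
      Nonempty (α ≃o Fin m)) ∧
    (Nat.card {W : Set α // IsUpperIdeal (fun a b : α => a ≤ b) W} = 2 ^ (m - 1) + 1 ↔
      ∃ e : α ≃ Fin m, ∀ a b : α, a ≤ b ↔ shrubLE m (e a) (e b)) :=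
  stmt16_general m α hcard root hroot
end
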